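/- arXiv:0709.4127 — 6 statements merged into one kernel-verified Lean document; each statement's English description precedes it below -/
import Mathlib

section
/- Let n > 3 be a natural number, let S be a class of singular limit ordinals, and let ⟨C_ν : ν ∈ S⟩ be a coherent square sequence on S. Assume that the set {α < ℵ_n : cf(α) = ℵ_{n−2} and α ∈ S} is stationary in ℵ_n. Then the set T_n = {β < ℵ_n : cf(β) = ℵ_1, β ∈ S, and ot(C_β) ≥ ℵ_{n−3}} is stationary in ℵ_n. -/
open Ordinal Cardinal Set

/-- `β` is a limit point of the set of ordinals `C`: `β > 0` and `β = sup (C ∩ β)`. -/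
def IsLimitPt (C : Set Ordinal) (β : Ordinal) : Prop :=
  0 < β ∧ β = sSup (C ∩ Set.Iio β)

/-- `C` is closed in `ν`: it contains all of its limit points below `ν`. -/
def ClosedIn (C : Set Ordinal) (ν : Ordinal) : Prop :=
  ∀ β < ν, IsLimitPt C β → β ∈ C

/-- `C` is unbounded (cofinal) in `ν`. -/
def UnboundedIn (C : Set Ordinal) (ν : Ordinal) : Prop :=
  sSup C = ν

/-- `C` is a closed unbounded subset of `κ`. -/
def IsClubIn (C : Set Ordinal) (κ : Ordinal) : Prop :=
  C ⊆ Set.Iio κ ∧ ClosedIn C κ ∧ UnboundedIn C κ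

/-- `T` is stationary in `κ`: it meets every club subset of `κ`. -/
def IsStationaryIn (T : Set Ordinal) (κ : Ordinal) : Prop :=
  ∀ C : Set Ordinal, IsClubIn C κ → (T ∩ C).Nonempty

/-- `ν` is a singular limit ordinal: a limit ordinal with `cf ν < ν`. -/
def IsSingLimit (ν : Ordinal) : Prop :=
  Order.IsSuccLimit ν ∧ ν.cof.ord < ν

/-- The order type of a set of ordinals. -/
noncomputable def otype (s : Set Ordinal.{0}) : Ordinal.{0} :=
  sInf {o : Ordinal.{0} | Ordinal.lift.{1, 0} o = Ordinal.type (@Subrel Ordinal.{0} (· < ·) (· ∈ s))}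

/-- `⟨C ν : ν ∈ S⟩` is a coherent square sequence on a class `S` of
singular limit ordinals. -/
def IsCoherentSquare (S : Set Ordinal) (C : Ordinal → Set Ordinal) : Prop :=
  (∀ ν ∈ S, IsSingLimit ν) ∧
  (∀ ν ∈ S, C ν ⊆ Set.Iio ν ∧ ClosedIn (C ν) ν ∧
    (Cardinal.aleph0 < ν.cof → UnboundedIn (C ν) ν)) ∧
  (∀ ν ∈ S, otype (C ν) < ν) ∧
  (∀ ν ∈ S, ∀ β < ν, IsLimitPt (C ν) β → β ∈ S ∧ C β = C ν ∩ Set.Iio β)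

/-!
Let `D` be a club in `κ = ℵ_n`. Its limit points again form a club, so stationarity yields
`α ∈ S` with `cf α = ℵ_{n-2}` that is a limit point of `D`. As `cf α > ℵ₀`, both `C α` and `D ∩ α`
are closed and cofinal in `α`, hence so is their intersection. Since `|ot (C α)| ≥ cf α > ℵ_{n-3}`,
already some proper initial segment `C α ∩ δ` has order type at least `ω_{n-3}`. The supremum `β`
of the first `ω₁` points of `C α ∩ D` above `δ` is a limit point of `C α` of cofinality `ℵ₁`, so
coherence gives `β ∈ S` and `C β = C α ∩ β ⊇ C α ∩ δ`, and `β ∈ D` because `D` is closed.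
-/
def CofinalIn (A : Set Ordinal) (ν : Ordinal) : Prop :=
  ∀ γ < ν, ∃ x ∈ A, γ < x ∧ x < ν

section LimitPoints

variable {A B : Set Ordinal} {β ν : Ordinal}

theorem isLimitPt_iff : IsLimitPt A β ↔ 0 < β ∧ CofinalIn A β := by
  refine ⟨fun h => ⟨h.1, fun γ hγ => ?_⟩, fun ⟨hβ, h⟩ => ⟨hβ, le_antisymm ?_ ?_⟩⟩
  · obtain ⟨x, hx, hγx⟩ := exists_lt_of_lt_csSup' (h.2 ▸ hγ)
    exact ⟨x, hx.1, hγx, hx.2⟩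
  · refine le_of_forall_lt fun γ hγ => ?_
    obtain ⟨x, hx, hγx, hxβ⟩ := h γ hγ
    exact hγx.trans_le (le_csSup ⟨β, fun _ hy => hy.2.le⟩ ⟨hx, hxβ⟩)
  · obtain ⟨x, hx, -, hxβ⟩ := h 0 hβ
    exact csSup_le ⟨x, hx, hxβ⟩ fun _ hy => hy.2.le

theorem IsLimitPt.mono (hAB : A ⊆ B) (h : IsLimitPt A β) : IsLimitPt B β := by
  rw [isLimitPt_iff] at h ⊢
  exact ⟨h.1, fun γ hγ => (h.2 γ hγ).imp fun _ ⟨hx, hγx⟩ => ⟨hAB hx, hγx⟩⟩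

theorem IsLimitPt.exists_mem_lt (h : IsLimitPt A β) : ∃ x ∈ A, x < β := by
  obtain ⟨x, hx, -, hxβ⟩ := (isLimitPt_iff.1 h).2 0 h.1
  exact ⟨x, hx, hxβ⟩

theorem ClosedIn.mono {μ : Ordinal} (h : ClosedIn A ν) (hμ : μ ≤ ν) : ClosedIn A μ :=
  fun β hβ => h β (hβ.trans_le hμ)

theorem cofinalIn_of_unboundedIn (hA : A ⊆ Iio ν) (h : UnboundedIn A ν) : CofinalIn A ν := by
  intro γ hγ
  obtain ⟨x, hx, hγx⟩ := exists_lt_of_lt_csSup' (h.symm ▸ hγ)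
  exact ⟨x, hx, hγx, hA hx⟩

theorem unboundedIn_of_cofinalIn (hA : A ⊆ Iio ν) (h : CofinalIn A ν) : UnboundedIn A ν := by
  rcases A.eq_empty_or_nonempty with rfl | hne
  · rcases eq_zero_or_pos ν with rfl | hν
    · exact csSup_empty
    · simpa using h 0 hν
  refine le_antisymm (csSup_le hne fun x hx => (hA hx).le) (le_of_forall_lt fun γ hγ => ?_)
  obtain ⟨x, hx, hγx, -⟩ := h γ hγ
  exact hγx.trans_le (le_csSup ⟨ν, fun _ hy => (hA hy).le⟩ hx)

theorem CofinalIn.inter_Ioi (h : CofinalIn A ν) {δ : Ordinal} (hδ : δ < ν) :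
    CofinalIn (A ∩ Ioi δ) ν := fun γ hγ =>
  let ⟨x, hx, hx₁, hx₂⟩ := h (max γ δ) (max_lt hγ hδ)
  ⟨x, ⟨hx, (le_max_right γ δ).trans_lt hx₁⟩, (le_max_left γ δ).trans_lt hx₁, hx₂⟩

theorem isLimitPt_of_isLimitPt_setOf_isLimitPt (h : IsLimitPt {x | IsLimitPt A x} β) :
    IsLimitPt A β := by
  rw [isLimitPt_iff] at h ⊢
  refine ⟨h.1, fun γ hγ => ?_⟩
  obtain ⟨x, hx, hγx, hxβ⟩ := h.2 γ hγ
  obtain ⟨y, hy, hγy, hyx⟩ := (isLimitPt_iff.1 hx).2 γ hγx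
  exact ⟨y, hy, hγy, hyx.trans hxβ⟩

end LimitPoints

section Cofinality

variable {A B : Set Ordinal} {ν : Ordinal}

theorem CofinalIn.setOf_isLimitPt_and (hν : ℵ₀ < ν.cof) (hA : CofinalIn A ν)
    (hB : CofinalIn B ν) : CofinalIn {β | IsLimitPt A β ∧ IsLimitPt B β} ν := by
  have : ∀ γ, ∃ b, γ < ν → b ∈ B ∧ b < ν ∧ ∃ a ∈ A, γ < a ∧ a < b := by
    intro γ
    by_cases hγ : γ < ν
    · obtain ⟨a, ha, hγa, haν⟩ := hA γ hγ
      obtain ⟨b, hb, hab, hbν⟩ := hB a haν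
      exact ⟨b, fun _ => ⟨hb, hbν, a, ha, hγa, hab⟩⟩
    · exact ⟨0, fun h => absurd h hγ⟩
  -- `step γ ∈ B` lies above a point of `A` above `γ`; the supremum `nfp step γ` of the
  -- `ω` iterates is a common limit point, and stays below `ν` because `cf ν > ℵ₀`.
  choose step hstep using this
  intro γ hγ
  have hlt : ∀ k, step^[k] γ < ν := by
    intro k
    induction k with
    | zero => exact hγ
    | succ k ih => rw [Function.iterate_succ_apply']; exact (hstep _ ih).2.1
  have hA_between : ∀ k, ∃ a ∈ A, step^[k] γ < a ∧ a < step^[k + 1] γ := fun k => by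
    rw [Function.iterate_succ_apply']; exact (hstep _ (hlt k)).2.2
  have hB_mem : ∀ k, step^[k + 1] γ ∈ B := fun k => by
    rw [Function.iterate_succ_apply']; exact (hstep _ (hlt k)).1
  have hmono : ∀ k, step^[k] γ < step^[k + 1] γ := fun k =>
    let ⟨_, _, h₁, h₂⟩ := hA_between k; h₁.trans h₂
  have hβ : ∀ k, step^[k] γ < nfp step γ := fun k =>
    (hmono k).trans_le (iterate_le_nfp _ _ _)
  have hβ₀ : 0 < nfp step γ := (hβ 0).pos
  refine ⟨nfp step γ,
    ⟨isLimitPt_iff.2 ⟨hβ₀, fun b hb => ?_⟩, isLimitPt_iff.2 ⟨hβ₀, fun b hb => ?_⟩⟩,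
    hβ 0, nfp_lt_ord hν (fun i hi => (hstep i hi).2.1) hγ⟩
  · obtain ⟨k, hk⟩ := lt_nfp_iff.1 hb
    obtain ⟨a, ha, h₁, h₂⟩ := hA_between k
    exact ⟨a, ha, hk.trans h₁, h₂.trans (hβ _)⟩
  · obtain ⟨k, hk⟩ := lt_nfp_iff.1 hb
    exact ⟨_, hB_mem k, hk.trans (hmono k), hβ _⟩

theorem CofinalIn.inter (hν : ℵ₀ < ν.cof) (hA : CofinalIn A ν) (hB : CofinalIn B ν)
    (hA' : ClosedIn A ν) (hB' : ClosedIn B ν) : CofinalIn (A ∩ B) ν := by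
  intro γ hγ
  obtain ⟨β, ⟨hAβ, hBβ⟩, hγβ, hβν⟩ := hA.setOf_isLimitPt_and hν hB γ hγ
  exact ⟨β, ⟨hA' β hβν hAβ, hB' β hβν hBβ⟩, hγβ, hβν⟩

theorem isClubIn_setOf_isLimitPt (hν : ℵ₀ < ν.cof) (hA : CofinalIn A ν) :
    IsClubIn {β | β < ν ∧ IsLimitPt A β} ν := by
  refine ⟨fun _ h => h.1, fun β hβ h => ⟨hβ, ?_⟩, unboundedIn_of_cofinalIn (fun _ h => h.1) ?_⟩
  · exact isLimitPt_of_isLimitPt_setOf_isLimitPt (h.mono fun _ hx => hx.2)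
  · intro γ hγ
    obtain ⟨β, ⟨hAβ, -⟩, hγβ, hβν⟩ := hA.setOf_isLimitPt_and hν hA γ hγ
    exact ⟨β, ⟨hβν, hAβ⟩, hγβ, hβν⟩

theorem iSup_Iio_lt_of_card_lt_cof {a : Ordinal} {f : Iio a → Ordinal} (ha : a.card < ν.cof)
    (hf : ∀ j, f j < ν) : ⨆ j, f j < ν := by
  refine lift_iSup_lt_of_lt_cof ?_ hf
  rwa [Cardinal.mk_Iio_ordinal, ← lift_cof, Cardinal.lift_lift, Cardinal.lift_lt]

theorem CofinalIn.exists_isLimitPt_cof_eq (hA : CofinalIn A ν) {a : Ordinal}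
    (ha : Order.IsSuccLimit a) (hcard : a.card < ν.cof) :
    ∃ β < ν, IsLimitPt A β ∧ β.cof = a.cof := by
  have hunb : ¬ BddAbove (A ∪ Ici ν) := not_bddAbove_iff.2 fun b =>
    ⟨max (b + 1) ν, Or.inr (mem_Ici.2 (le_max_right _ _)),
      (lt_add_one b).trans_le (le_max_left _ _)⟩
  -- Adjoining `[ν, ∞)` makes `enumOrd` strictly monotone; its first `a` values stay in `A`
  -- because at each stage fewer than `cf ν` values lie below.
  set e := enumOrd (A ∪ Ici ν)
  have he : ∀ j < a, e j < ν := by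
    intro j
    induction j using WellFoundedLT.induction with | _ j ih => ?_
    intro hj
    have hsup : ⨆ k : Iio j, e k < ν := iSup_Iio_lt_of_card_lt_cof
      ((card_le_card hj.le).trans_lt hcard) fun k => ih k k.2 (k.2.trans hj)
    obtain ⟨x, hx, hsx, hxν⟩ := hA _ hsup
    refine (enumOrd_le_of_forall_lt (Or.inl hx) fun k hk => ?_).trans_lt hxν
    exact (le_ciSup Ordinal.bddAbove_of_small (⟨k, hk⟩ : Iio j)).trans_lt hsx
  set f : Iio a → Ordinal := fun j => e j
  have hf : StrictMono f := (enumOrd_strictMono hunb).comp (Subtype.strictMono_coe _)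
  have hfA : ∀ j, f j ∈ A := fun j => (enumOrd_mem hunb j).resolve_right (he j j.2).not_ge
  have hfβ : ∀ j, f j < ⨆ j, f j := fun j =>
    (hf (show j < ⟨_, ha.succ_lt j.2⟩ from Order.lt_succ j.1)).trans_le
      (le_ciSup Ordinal.bddAbove_of_small _)
  refine ⟨⨆ j, f j, iSup_Iio_lt_of_card_lt_cof hcard fun j => he j j.2,
    isLimitPt_iff.2 ⟨(hfβ ⟨0, ha.bot_lt⟩).pos, fun b hb => ?_⟩, cof_iSup_Iio hf ha.isSuccPrelimit⟩
  have : Nonempty (Iio a) := ⟨⟨0, ha.bot_lt⟩⟩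
  obtain ⟨j, hj⟩ := (lt_ciSup_iff Ordinal.bddAbove_of_small).1 hb
  exact ⟨f j, hfA j, hj, hfβ j⟩

end Cofinality

section OrderType

variable {s t : Set Ordinal.{0}}

-- `otype s` is an infimum, attained only when `s` is small; otherwise it is the junk value `0`.
theorem lift_otype (hs : BddAbove s) :
    Ordinal.lift.{1} (otype s) = Ordinal.type (@Subrel Ordinal.{0} (· < ·) (· ∈ s)) := by
  obtain ⟨ν, hν⟩ := hs
  have hle : Ordinal.type (@Subrel Ordinal.{0} (· < ·) (· ∈ s)) ≤ Ordinal.lift.{1} (ν + 1) := by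
    rw [← type_lt_Iio]
    exact RelEmbedding.ordinal_type_le <| RelEmbedding.ofMonotone
      (fun x => ⟨x.1, (hν x.2).trans_lt (lt_add_one ν)⟩) fun _ _ h => h
  exact csInf_mem (mem_range_lift_of_le hle)

theorem otype_mono (hst : s ⊆ t) (ht : BddAbove t) : otype s ≤ otype t := by
  rw [← Ordinal.lift_le.{1}, lift_otype (ht.mono hst), lift_otype ht]
  exact RelEmbedding.ordinal_type_le
    (RelEmbedding.ofMonotone (fun x => ⟨x.1, hst x.2⟩) fun _ _ h => h)

theorem otype_inter_Iio_lt (ht : BddAbove t) {γ : Ordinal} (hγ : γ ∈ t) :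
    otype (t ∩ Iio γ) < otype t := by
  rw [← Ordinal.lift_lt.{1}, lift_otype (ht.mono inter_subset_left), lift_otype ht]
  refine PrincipalSeg.ordinal_type_lt
    ⟨RelEmbedding.ofMonotone (fun x => ⟨x.1, x.2.1⟩) fun _ _ h => h, ⟨γ, hγ⟩, fun b => ?_⟩
  exact ⟨by rintro ⟨a, rfl⟩; exact a.2.2, fun hb => ⟨⟨b.1, b.2, hb⟩, rfl⟩⟩

theorem otype_le_of_forall_otype_inter_Iio_lt (ht : BddAbove t) {θ : Ordinal}
    (h : ∀ γ ∈ t, otype (t ∩ Iio γ) < θ) : otype t ≤ θ := by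
  rw [← Ordinal.lift_le.{1}, lift_otype ht, ← type_lt_Iio]
  refine RelEmbedding.ordinal_type_le <| RelEmbedding.ofMonotone
    (fun x => ⟨otype (t ∩ Iio x.1), h x.1 x.2⟩) fun a b hab => ?_
  have hsub : (t ∩ Iio b.1) ∩ Iio a.1 = t ∩ Iio a.1 := by
    rw [inter_assoc, Iio_inter_Iio, min_eq_right (le_of_lt hab)]
  show otype (t ∩ Iio a.1) < otype (t ∩ Iio b.1)
  rw [← hsub]
  exact otype_inter_Iio_lt (ht.mono inter_subset_left) ⟨a.2, hab⟩

theorem cof_le_card_otype {ν : Ordinal} (hsub : s ⊆ Iio ν) (hs : CofinalIn s ν) :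
    ν.cof ≤ (otype s).card := by
  have hcof : IsCofinal (Subtype.val ⁻¹' s : Set (Iio ν)) := fun x =>
    let ⟨y, hy, hxy, hyν⟩ := hs x.1 x.2
    ⟨⟨y, hyν⟩, hy, hxy.le⟩
  rw [← Cardinal.lift_le.{1}, lift_cof, ← cof_Iio, lift_card,
    lift_otype ⟨ν, fun _ h => (hsub h).le⟩, card_type]
  exact (Order.cof_le hcof).trans (mk_preimage_of_injective _ _ Subtype.val_injective)

theorem CofinalIn.exists_le_otype_inter_Iio {ν : Ordinal} (hsub : s ⊆ Iio ν) (hs : CofinalIn s ν)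
    {θ : Ordinal} (hθ : θ.card < ν.cof) : ∃ δ < ν, θ ≤ otype (s ∩ Iio δ) := by
  by_contra! h
  have hbdd : BddAbove s := ⟨ν, fun _ h => (hsub h).le⟩
  have := otype_le_of_forall_otype_inter_Iio_lt hbdd fun γ hγ => h γ (hsub hγ)
  exact ((cof_le_card_otype hsub hs).trans (card_le_card this)).not_gt hθ

end OrderType

theorem aleph0_lt_cof_ord_aleph_natCast {n : ℕ} (hn : 0 < n) :
    ℵ₀ < (aleph (n : Ordinal)).ord.cof := by
  obtain ⟨m, rfl⟩ := Nat.exists_eq_add_one_of_ne_zero hn.ne'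
  rw [Nat.cast_succ, (isRegular_aleph_add_one _).cof_ord]
  exact aleph0_lt_aleph.2 (by positivity)

/-- If `{α < ℵ_n : cf α = ℵ_{n-2}, α ∈ S}` is stationary in `ℵ_n` (for `n > 3`),
then `T_n = {β < ℵ_n : cf β = ℵ_1, β ∈ S, ot (C_β) ≥ ℵ_{n-3}}` is stationary in `ℵ_n`. -/
theorem squareSeq_stationary_large_order_type
    (n : ℕ) (hn : 3 < n) (S : Set Ordinal) (C : Ordinal → Set Ordinal)
    (hsq : IsCoherentSquare S C)
    (hstat : IsStationaryIn
      {α | α < (Cardinal.aleph (n : Ordinal)).ord ∧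
           α.cof = Cardinal.aleph ((n - 2 : ℕ) : Ordinal) ∧ α ∈ S}
      (Cardinal.aleph (n : Ordinal)).ord) :
    IsStationaryIn
      {β | β < (Cardinal.aleph (n : Ordinal)).ord ∧
           β.cof = Cardinal.aleph 1 ∧ β ∈ S ∧
           (Cardinal.aleph ((n - 3 : ℕ) : Ordinal)).ord ≤ otype (C β)}
      (Cardinal.aleph (n : Ordinal)).ord := by
  obtain ⟨-, hC, -, hcoh⟩ := hsq
  rintro D ⟨hDsub, hDclosed, hDunb⟩
  have hκ := aleph0_lt_cof_ord_aleph_natCast (n := n) (by omega)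
  obtain ⟨α, ⟨hακ, hαcof, hαS⟩, -, hαD⟩ :=
    hstat _ (isClubIn_setOf_isLimitPt hκ (cofinalIn_of_unboundedIn hDsub hDunb))
  have hα : ℵ₀ < α.cof := hαcof ▸ aleph0_lt_aleph.2 (by exact_mod_cast (by omega : 0 < n - 2))
  obtain ⟨hCα, hCαclosed, hCαunb⟩ := hC α hαS
  have hCαcof := cofinalIn_of_unboundedIn hCα (hCαunb hα)
  obtain ⟨δ, hδα, hδ⟩ := hCαcof.exists_le_otype_inter_Iio hCα
    (θ := (aleph ((n - 3 : ℕ) : Ordinal)).ord) (by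
      rw [card_ord, hαcof]; exact aleph_lt_aleph.2 (by exact_mod_cast (by omega : n - 3 < n - 2)))
  have hs : CofinalIn (C α ∩ D ∩ Ioi δ) α :=
    (hCαcof.inter hα (isLimitPt_iff.1 hαD).2 hCαclosed (hDclosed.mono hακ.le)).inter_Ioi hδα
  obtain ⟨β, hβα, hβ, hβcof⟩ := hs.exists_isLimitPt_cof_eq (isSuccLimit_ord (aleph0_le_aleph 1))
    (by rw [card_ord, hαcof]; exact aleph_lt_aleph.2 (by exact_mod_cast (by omega : 1 < n - 2)))
  obtain ⟨hβS, hCβ⟩ := hcoh α hαS β hβα (hβ.mono fun _ h => h.1.1)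
  obtain ⟨x, hx, hxβ⟩ := hβ.exists_mem_lt
  refine ⟨β, ⟨hβα.trans hακ, ?_, hβS, ?_⟩, hDclosed β (hβα.trans hακ) (hβ.mono fun _ h => h.1.2)⟩
  · rw [hβcof, isRegular_aleph_one.cof_ord]
  · rw [hCβ]
    refine hδ.trans (otype_mono (inter_subset_inter_right _ (Iio_subset_Iio ?_)) ⟨α, ?_⟩)
    · exact hx.2.le.trans hxβ.le
    · exact fun _ h => (hCα h.1).le
end

section
/- Let ρ be an infinite regular cardinal, let μ be an ordinal, and let D be a set of ordinals that is closed in sup(D) (i.e., D contains every ordinal β̄ < sup(D) with β̄ = sup(D ∩ β̄) > 0) and whose order type satisfies ot(D) ≥ μ + ρ (ordinal addition). Then there exists an ordinal β which is a limit point of D (i.e., β > 0 and β = sup(D ∩ β)) such that cf(β) = ρ and ot(D ∩ β) ≥ μ. -/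
open Ordinal Cardinal Set

/-!
Enumerate `D` increasingly as `(d ξ)_{ξ < ot D}`. The points `d (μ + ξ)`, `ξ < ρ`, form a strictly
increasing `ρ`-sequence in `D`; its supremum `β` is a limit point of `D` of cofinality `cf ρ = ρ`,
and `D ∩ β` contains the `μ` points `d ξ`, `ξ < μ`, all below `d μ < β`.
-/

open Order

universe u

section OrderType

variable {s : Set Ordinal.{0}}

theorem lift_otype_of_mem_range (h : typeLT s ∈ range Ordinal.lift.{1, 0}) :
    Ordinal.lift.{1} (otype s) = typeLT s :=
  csInf_mem h

-- `otype s` is the junk value `sInf ∅ = 0` unless `typeLT s` is the lift of an ordinal.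
theorem lift_otype_of_pos (h : 0 < otype s) : Ordinal.lift.{1} (otype s) = typeLT s := by
  refine lift_otype_of_mem_range (by_contra fun hnot => h.ne' ?_)
  exact (congrArg sInf (eq_empty_of_forall_notMem fun o ho => hnot ⟨o, ho⟩)).trans sInf_empty

theorem lift_otype_of_bddAbove (h : BddAbove s) : Ordinal.lift.{1} (otype s) = typeLT s := by
  obtain ⟨b, hb⟩ := h
  refine lift_otype_of_mem_range (mem_range_lift_of_le (a := succ b) ?_)
  calc typeLT s ≤ typeLT (Iio (succ b)) := type_mono fun x hx => lt_succ_of_le (hb hx)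
    _ = Ordinal.lift (succ b) := type_lt_Iio _

theorem nonempty_orderIso_Iio_otype (h : 0 < otype s) : Nonempty (Iio (otype s) ≃o s) := by
  obtain ⟨e⟩ := type_eq.1 ((type_lt_Iio (otype s)).trans (lift_otype_of_pos h))
  exact ⟨OrderIso.ofRelIsoLT e⟩

theorem le_otype_of_orderEmbedding {μ : Ordinal.{0}} (hs : BddAbove s) (f : Iio μ ↪o s) :
    μ ≤ otype s := by
  rw [← Ordinal.lift_le.{1}, lift_otype_of_bddAbove hs, ← type_lt_Iio]
  exact f.ltEmbedding.ordinal_type_le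

theorem le_otype_inter_Iio (e : Iio (otype s) ≃o s) {μ b : Ordinal.{0}} (hμ : μ < otype s)
    (hb : e ⟨μ, hμ⟩ < b) : μ ≤ otype (s ∩ Iio b) := by
  refine le_otype_of_orderEmbedding ⟨b, fun x hx => hx.2.le⟩ <| .ofStrictMono
    (fun x => ⟨e ⟨x, x.2.trans hμ⟩, (e _).2, lt_trans ?_ hb⟩) fun x y hxy => e.strictMono hxy
  exact e.strictMono x.2

end OrderType

theorem lt_iSup_of_strictMono {a : Ordinal.{u}} (ha : IsSuccPrelimit a) {f : Iio a → Ordinal.{u}}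
    (hf : StrictMono f) (i : Iio a) : f i < ⨆ i, f i :=
  (iSup_Iio_add_one hf ha) ▸ lt_iSup_add_one f i

theorem isLimitPt_iSup {D : Set Ordinal.{u}} {a : Ordinal.{u}} (ha : IsSuccLimit a)
    {f : Iio a → Ordinal.{u}} (hf : StrictMono f) (hfD : ∀ i, f i ∈ D) :
    IsLimitPt D (⨆ i, f i) := by
  have hlt := lt_iSup_of_strictMono ha.isSuccPrelimit hf
  let i : Iio a := ⟨0, ha.pos⟩
  have : Nonempty (Iio a) := ⟨i⟩
  refine ⟨zero_le.trans_lt (hlt i), le_antisymm ?_ (csSup_le ⟨_, hfD i, hlt i⟩ fun x hx => hx.2.le)⟩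
  exact ciSup_le fun j => le_csSup ⟨_, fun x hx => hx.2.le⟩ ⟨hfD j, hlt j⟩

theorem exists_limitPt_cof_of_closed_large_order_type_general
    (ρ : Cardinal) (hρ : ρ.IsRegular) (μ : Ordinal) (D : Set Ordinal)
    (hot : μ + ρ.ord ≤ otype D) :
    ∃ β, IsLimitPt D β ∧ β.cof = ρ ∧ μ ≤ otype (D ∩ Set.Iio β) := by
  have hρlim : IsSuccLimit ρ.ord := isSuccLimit_ord hρ.aleph0_le
  have h0 : (0 : Ordinal) < ρ.ord := hρlim.pos
  obtain ⟨e⟩ := nonempty_orderIso_Iio_otype (h0.trans_le (le_add_self.trans hot))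
  have hμρ : ∀ ξ : Iio ρ.ord, μ + ξ < otype D := fun ξ => (add_lt_add_right ξ.2 μ).trans_le hot
  let g : Iio ρ.ord → Ordinal := fun ξ => e ⟨μ + ξ, hμρ ξ⟩
  have hg : StrictMono g := fun ξ η h => e.strictMono (add_lt_add_right (Subtype.coe_lt_coe.2 h) μ)
  refine ⟨⨆ ξ, g ξ, isLimitPt_iSup hρlim hg fun ξ => (e _).2, ?_, ?_⟩
  · rw [cof_iSup_Iio hg hρlim.isSuccPrelimit, hρ.cof_ord]
  · refine le_otype_inter_Iio e ((add_zero μ).symm.trans_lt (hμρ ⟨0, h0⟩)) ?_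
    simpa [g] using lt_iSup_of_strictMono hρlim.isSuccPrelimit hg ⟨0, h0⟩

/-- If `D` is a set of ordinals closed in `sup D` with `ot D ≥ μ + ρ` (`ρ` an
infinite regular cardinal), then there is a limit point `β` of `D` with
`cf β = ρ` and `ot (D ∩ β) ≥ μ`. -/
theorem exists_limitPt_cof_of_closed_large_order_type
    (ρ : Cardinal) (hρ : ρ.IsRegular) (μ : Ordinal) (D : Set Ordinal)
    (hclosed : ClosedIn D (sSup D))
    (hot : μ + ρ.ord ≤ otype D) :
    ∃ β, IsLimitPt D β ∧ β.cof = ρ ∧ μ ≤ otype (D ∩ Set.Iio β) :=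
  exists_limitPt_cof_of_closed_large_order_type_general ρ hρ μ D hot
end

section
/- Suppose A is a class of ordinals such that every singular cardinal belongs to A and, for every infinite cardinal κ, the set A ∩ κ⁺ is closed and unbounded in the successor cardinal κ⁺. Let S = {ν ∈ A : ν is a singular limit ordinal} and suppose ⟨C_ν : ν ∈ S⟩ is a coherent square sequence on S. Then there exists a system ⟨C′_β : β a singular limit ordinal⟩ defined on ALL singular limit ordinals such that: (a) C′_β is a closed cofinal subset of β; (b) ot(C′_β) < β; (c) if β̄ is a limit point of C′_β then β̄ is a singular limit ordinal and C′_{β̄} = C′_β ∩ β̄ (i.e., a Global Square sequence). -/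
open Ordinal Cardinal Set

/-!
On `A` keep `C β` when it is cofinal in `β`; otherwise `cf β = ω` and an `ω`-ladder, which has no
limit points at all, will do. An ordinal `β ∉ A` lies in a gap `(η, θ)` of `A`, where
`η = sup (A ∩ β)` and `θ = min (A \ β)`; the club hypothesis gives `|θ| ≤ |β|`, and it puts every
uncountable cardinal into `A`, so `μ = |θ|` is at most `max η ω`. Fix one enumeration `b` of `θ`
of length `μ` and let `C' β` consist of the suprema `sup (b[i] ∩ β)`, `i < μ`, lying in
`(max η ω, β)`. A limit point `γ` of `C' β` is `sup (b[j] ∩ β)` for a limit `j`, below which these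
suprema do not change when `β` is replaced by `γ`; so `γ` is in the same gap and
`C' γ = C' β ∩ γ`. Its cofinality is at most `μ < γ`, hence `γ` is singular.
-/

open Order Function

universe u

lemma csSup_eq_of_forall_le_of_forall_lt_exists_gt' {α : Type*}
    [ConditionallyCompleteLinearOrderBot α] {s : Set α} {b : α} (hle : ∀ y ∈ s, y ≤ b)
    (hlt : ∀ x < b, ∃ y ∈ s, x < y) : sSup s = b :=
  (csSup_le' hle).antisymm <| le_of_forall_lt fun x hx => by
    obtain ⟨y, hy, hxy⟩ := hlt x hx
    exact hxy.trans_le (le_csSup ⟨b, hle⟩ hy)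

lemma le_sSup_inter_Iio {s : Set Ordinal.{u}} {a β : Ordinal.{u}} (ha : a ∈ s) (haβ : a < β) :
    a ≤ sSup (s ∩ Iio β) :=
  le_csSup (bddAbove_Iio.mono inter_subset_right) ⟨ha, haβ⟩

section LimitPoints

variable {C : Set Ordinal.{u}} {β x : Ordinal.{u}}

lemma IsLimitPt.exists_mem_Ioo (h : IsLimitPt C β) (hx : x < β) : ∃ y ∈ C, x < y ∧ y < β :=
  let ⟨y, ⟨hyC, hyβ⟩, hxy⟩ := exists_lt_of_lt_csSup' (hx.trans_eq h.2)
  ⟨y, hyC, hxy, hyβ⟩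

lemma IsLimitPt.isSuccLimit (h : IsLimitPt C β) : IsSuccLimit β := by
  rcases zero_or_succ_or_isSuccLimit β with rfl | ⟨γ, rfl⟩ | hβ
  · exact absurd h.1 (lt_irrefl 0)
  · obtain ⟨y, -, hγy, hy⟩ := h.exists_mem_Ioo (lt_succ γ)
    exact absurd hy (not_lt.2 (succ_le_of_lt hγy))
  · exact hβ

lemma not_isLimitPt_of_finite (h : (C ∩ Iio β).Finite) : ¬IsLimitPt C β := fun hβ => by
  obtain ⟨y, hy, -, hyβ⟩ := hβ.exists_mem_Ioo hβ.1
  exact ((show (C ∩ Iio β).Nonempty from ⟨y, hy, hyβ⟩).csSup_mem h).2.ne hβ.2.symm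

lemma IsLimitPt.lift_cof_le_mk (h : IsLimitPt C β) : Cardinal.lift.{u + 1} β.cof ≤ #C := by
  rw [lift_cof, ← cof_Iio]
  refine (Order.cof_le (s := Subtype.val ⁻¹' C) fun x => ?_).trans
    (mk_preimage_of_injective _ _ Subtype.val_injective)
  obtain ⟨y, hyC, hxy, hyβ⟩ := h.exists_mem_Ioo x.2
  exact ⟨⟨y, hyβ⟩, hyC, hxy.le⟩

lemma IsSingLimit.omega0_lt (h : IsSingLimit β) : ω < β :=
  (ord_aleph0 ▸ ord_le_ord.2 (aleph0_le_cof_iff.2 (one_lt_cof_iff.2 h.1))).trans_lt h.2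

end LimitPoints

lemma otype_le_of_strictMonoOn {s : Set Ordinal.{0}} {c : Ordinal.{0}} (f : Ordinal → Ordinal)
    (hf : StrictMonoOn f s) (hmaps : MapsTo f s (Iio c)) : otype s ≤ c := by
  let e : @Subrel Ordinal (· < ·) (· ∈ s) ↪r @Subrel Ordinal (· < ·) (· ∈ Iio c) :=
    RelEmbedding.ofMonotone (fun x => ⟨f x, hmaps x.2⟩) fun x y h => hf x.2 y.2 h
  have hle : type (@Subrel Ordinal (· < ·) (· ∈ s)) ≤ lift.{1} c :=
    typein_ordinal c ▸ e.ordinal_type_le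
  obtain ⟨o, ho⟩ := mem_range_lift_of_le hle
  exact (csInf_le' (a := o) ho).trans (lift_le.1 (ho.trans_le hle))

lemma otype_le_of_subset_image {s : Set Ordinal.{0}} {e : Ordinal → Ordinal} {μ : Ordinal}
    (he : Monotone e) (hs : s ⊆ e '' Iio μ) : otype s ≤ μ := by
  have hinv : ∀ {y}, y ∈ s → e (sInf (e ⁻¹' {y})) = y := fun hy =>
    let ⟨i, _, hi⟩ := hs hy
    csInf_mem (s := e ⁻¹' {_}) ⟨i, hi⟩
  refine otype_le_of_strictMonoOn (fun y => sInf (e ⁻¹' {y})) (fun y hy y' hy' hyy' => ?_)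
    fun y hy => ?_
  · by_contra! h
    exact hyy'.not_ge (hinv hy' ▸ hinv hy ▸ he h)
  · obtain ⟨i, hi, hiy⟩ := hs hy
    exact (csInf_le' (s := e ⁻¹' {y}) hiy).trans_lt hi

section Ladder

def IsLadder (L : Set Ordinal.{0}) (β : Ordinal.{0}) : Prop :=
  L ⊆ Iio β ∧ UnboundedIn L β ∧ otype L ≤ ω ∧ ∀ γ < β, ¬IsLimitPt L γ

lemma exists_strictMono_nat_cofinal {β : Ordinal.{u}} (hβ : β.cof = ℵ₀) :
    ∃ g : ℕ → Ordinal, StrictMono g ∧ (∀ n, g n < β) ∧ ∀ x < β, ∃ n, x ≤ g n := by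
  obtain ⟨f, hf⟩ := exists_isFundamentalSeq (o := β) (a := ω) (by rw [hβ, ord_aleph0])
  refine ⟨fun n => f ⟨n, natCast_lt_omega0 n⟩,
    fun m n hmn => hf.strictMono (Subtype.mk_lt_mk.2 (Nat.cast_lt.2 hmn)), fun n => (f _).2,
    fun x hx => ?_⟩
  obtain ⟨_, ⟨⟨i, hi⟩, rfl⟩, hxi⟩ := hf.isCofinal_range ⟨x, hx⟩
  obtain ⟨n, rfl⟩ := lt_omega0.1 hi
  exact ⟨n, hxi⟩

lemma exists_isLadder {β : Ordinal.{0}} (hβ : IsSuccLimit β) (hcof : β.cof = ℵ₀) :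
    ∃ L, IsLadder L β := by
  obtain ⟨g, hg, hgβ, hcofinal⟩ := exists_strictMono_nat_cofinal hcof
  refine ⟨range g, forall_mem_range.2 hgβ, ?_, ?_, fun γ hγ => not_isLimitPt_of_finite ?_⟩
  · refine csSup_eq_of_forall_le_of_forall_lt_exists_gt' (forall_mem_range.2 fun n => (hgβ n).le)
      fun x hx => ?_
    obtain ⟨n, hn⟩ := hcofinal _ (hβ.succ_lt hx)
    exact ⟨g n, mem_range_self n, (lt_succ x).trans_le hn⟩
  · refine otype_le_of_strictMonoOn (fun x => ((invFun g x : ℕ) : Ordinal)) ?_ ?_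
    · rintro _ ⟨m, rfl⟩ _ ⟨n, rfl⟩ hmn
      simpa [leftInverse_invFun hg.injective _] using hg.lt_iff_lt.1 hmn
    · rintro _ ⟨n, rfl⟩
      exact natCast_lt_omega0 _
  · obtain ⟨N, hN⟩ := hcofinal γ hγ
    refine ((finite_Iio N).image g).subset ?_
    rintro _ ⟨⟨n, rfl⟩, hn⟩
    exact ⟨n, hg.lt_iff_lt.1 (hn.trans_le hN), rfl⟩

noncomputable def ladder (β : Ordinal.{0}) : Set Ordinal.{0} :=
  Classical.epsilon (IsLadder · β)

lemma isLadder_ladder {β : Ordinal.{0}} (hβ : IsSuccLimit β) (hcof : β.cof = ℵ₀) :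
    IsLadder (ladder β) β :=
  Classical.epsilon_spec (exists_isLadder hβ hcof)

end Ladder

section Gap

variable {b : Ordinal.{u} → Ordinal.{u}} {β i x μ η : Ordinal.{u}}

noncomputable def supBelow (b : Ordinal.{u} → Ordinal.{u}) (β i : Ordinal.{u}) : Ordinal.{u} :=
  sSup (b '' Iio i ∩ Iio β)

def supBelowSet (μ η : Ordinal.{u}) (b : Ordinal.{u} → Ordinal.{u}) (β : Ordinal.{u}) :
    Set Ordinal.{u} :=
  Ioo η β ∩ supBelow b β '' Iio μ

lemma le_supBelow {ζ : Ordinal} (hζ : ζ < i) (h : b ζ < β) : b ζ ≤ supBelow b β i :=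
  le_sSup_inter_Iio (mem_image_of_mem b hζ) h

lemma supBelow_mono : Monotone (supBelow b β) := fun i j hij => csSup_le' <| by
  rintro _ ⟨⟨ζ, hζ, rfl⟩, hζβ⟩
  exact le_supBelow (lt_of_lt_of_le hζ hij) hζβ

lemma supBelow_zero : supBelow b β 0 = 0 := by
  simp [supBelow]

lemma supBelow_succ_lt (h : supBelow b β i < β) : supBelow b β (succ i) < β := by
  by_cases hb : b i < β
  · refine (csSup_le' ?_).trans_lt (max_lt h hb)
    rintro _ ⟨⟨ζ, hζ, rfl⟩, hζβ⟩
    rcases (lt_succ_iff.1 (mem_Iio.1 hζ)).lt_or_eq with hζi | rfl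
    · exact (le_supBelow hζi hζβ).trans (le_max_left _ _)
    · exact le_max_right _ _
  · refine (csSup_le' ?_).trans_lt h
    rintro _ ⟨⟨ζ, hζ, rfl⟩, hζβ⟩
    rcases (lt_succ_iff.1 (mem_Iio.1 hζ)).lt_or_eq with hζi | rfl
    · exact le_supBelow hζi hζβ
    · exact absurd hζβ hb

lemma supBelow_le_of_isSuccLimit (hi : IsSuccLimit i) (h : ∀ j < i, supBelow b β j ≤ x) :
    supBelow b β i ≤ x :=
  csSup_le' <| by
    rintro _ ⟨⟨ζ, hζ, rfl⟩, hζβ⟩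
    exact (le_supBelow (lt_succ ζ) hζβ).trans (h _ (hi.succ_lt hζ))

lemma exists_lt_supBelow (hμ : IsSuccLimit μ) (hβ : IsSuccLimit β) (hb : SurjOn b (Iio μ) (Iio β))
    (hx : x < β) : ∃ i < μ, x < supBelow b β i := by
  obtain ⟨ζ, hζ, hbζ⟩ := hb (hβ.succ_lt hx)
  refine ⟨succ ζ, hμ.succ_lt hζ, (lt_succ x).trans_le ?_⟩
  rw [← hbζ]
  exact le_supBelow (lt_succ ζ) (hbζ ▸ hβ.succ_lt hx)

lemma exists_supBelow_mem_Ioo (hμ : IsSuccLimit μ) (hβ : IsSuccLimit β)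
    (hb : SurjOn b (Iio μ) (Iio β)) (hx : x < β) : ∃ i < μ, supBelow b β i ∈ Ioo x β := by
  obtain ⟨i₀, hi₀μ, hi₀⟩ := exists_lt_supBelow hμ hβ hb hx
  obtain ⟨i, hii₀, hi⟩ := exists_minimal_le_of_wellFoundedLT (x < supBelow b β ·) i₀ hi₀
  have hmin : ∀ j < i, supBelow b β j ≤ x := fun j hj => not_lt.1 (hi.not_prop_of_lt hj)
  refine ⟨i, hii₀.trans_lt hi₀μ, hi.prop, ?_⟩
  rcases zero_or_succ_or_isSuccLimit i with rfl | ⟨j, rfl⟩ | hlim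
  · simpa [supBelow_zero] using hi.prop
  · exact supBelow_succ_lt ((hmin j (lt_succ j)).trans_lt hx)
  · exact absurd hi.prop (not_lt.2 (supBelow_le_of_isSuccLimit hlim hmin))

lemma IsLimitPt.exists_supBelow_eq (hμ : IsSuccLimit μ) (hβ : IsSuccLimit β)
    (hb : SurjOn b (Iio μ) (Iio β)) (hxβ : x < β) (hx : IsLimitPt (supBelowSet μ η b β) x) :
    ∃ j < μ, IsSuccLimit j ∧ supBelow b β j = x ∧ ∀ i < j, supBelow b β i < x := by
  obtain ⟨i₀, hi₀μ, hi₀⟩ := exists_lt_supBelow hμ hβ hb hxβ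
  obtain ⟨j, hji₀, hj⟩ := exists_minimal_le_of_wellFoundedLT (x ≤ supBelow b β ·) i₀ hi₀.le
  have hmin : ∀ i < j, supBelow b β i < x := fun i hi => not_le.1 (hj.not_prop_of_lt hi)
  have hlim : IsSuccLimit j := by
    rcases zero_or_succ_or_isSuccLimit j with rfl | ⟨i, rfl⟩ | hlim
    · exact absurd hx.1 (not_lt.2 (supBelow_zero ▸ hj.prop))
    · obtain ⟨_, ⟨-, k, -, rfl⟩, hik, hkx⟩ := hx.exists_mem_Ioo (hmin i (lt_succ i))
      have hjk : succ i ≤ k := succ_le_of_lt (supBelow_mono.reflect_lt hik)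
      exact absurd (hj.prop.trans (supBelow_mono hjk)) (not_le.2 hkx)
    · exact hlim
  exact ⟨j, hji₀.trans_lt hi₀μ, hlim,
    (supBelow_le_of_isSuccLimit hlim fun i hi => (hmin i hi).le).antisymm hj.prop, hmin⟩

lemma closedIn_supBelowSet (hμ : IsSuccLimit μ) (hβ : IsSuccLimit β)
    (hb : SurjOn b (Iio μ) (Iio β)) : ClosedIn (supBelowSet μ η b β) β := by
  intro x hxβ hx
  obtain ⟨j, hjμ, -, hjx, -⟩ := hx.exists_supBelow_eq hμ hβ hb hxβ
  obtain ⟨_, ⟨⟨hηy, -⟩, -⟩, -, hyx⟩ := hx.exists_mem_Ioo hx.1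
  exact ⟨⟨hηy.trans hyx, hxβ⟩, j, hjμ, hjx⟩

lemma unboundedIn_supBelowSet (hμ : IsSuccLimit μ) (hβ : IsSuccLimit β)
    (hb : SurjOn b (Iio μ) (Iio β)) (hη : η < β) : UnboundedIn (supBelowSet μ η b β) β := by
  refine csSup_eq_of_forall_le_of_forall_lt_exists_gt' (fun _ hy => hy.1.2.le) fun x hx => ?_
  obtain ⟨i, hiμ, hxi, hiβ⟩ := exists_supBelow_mem_Ioo hμ hβ hb (max_lt hη hx)
  exact ⟨_, ⟨⟨(le_max_left _ _).trans_lt hxi, hiβ⟩, i, hiμ, rfl⟩, (le_max_right _ _).trans_lt hxi⟩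

lemma supBelowSet_eq_inter_Iio (hμ : IsSuccLimit μ) (hβ : IsSuccLimit β)
    (hb : SurjOn b (Iio μ) (Iio β)) (hxβ : x < β) (hx : IsLimitPt (supBelowSet μ η b β) x) :
    supBelowSet μ η b x = supBelowSet μ η b β ∩ Iio x := by
  obtain ⟨j, -, hjlim, hjx, hlt⟩ := hx.exists_supBelow_eq hμ hβ hb hxβ
  have heq : ∀ i ≤ j, supBelow b x i = supBelow b β i := fun i hij => by
    refine congrArg sSup (subset_antisymm (inter_subset_inter_right _ (Iio_subset_Iio hxβ.le)) ?_)
    rintro _ ⟨⟨ζ, hζ, rfl⟩, hζβ⟩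
    exact ⟨mem_image_of_mem b hζ,
      (le_supBelow (lt_succ ζ) hζβ).trans_lt (hlt _ (hjlim.succ_lt (hζ.trans_le hij)))⟩
  have hidx : ∀ {c i}, supBelow b c j = x → supBelow b c i < x → i < j := fun hj hi =>
    lt_of_not_ge fun hji => hi.not_ge (hj.symm.trans_le (supBelow_mono hji))
  ext y
  constructor
  · rintro ⟨⟨hηy, hyx⟩, i, hiμ, rfl⟩
    have hij := hidx ((heq j le_rfl).trans hjx) hyx
    rw [heq i hij.le] at hηy hyx ⊢
    exact ⟨⟨⟨hηy, hyx.trans hxβ⟩, i, hiμ, rfl⟩, hyx⟩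
  · rintro ⟨⟨⟨hηy, -⟩, i, hiμ, rfl⟩, hyx⟩
    have hij := hidx hjx hyx
    exact ⟨⟨hηy, hyx⟩, i, hiμ, heq i hij.le⟩

lemma mk_supBelowSet_le : #(supBelowSet μ η b β) ≤ Cardinal.lift.{u + 1} μ.card :=
  (mk_le_mk_of_subset inter_subset_right).trans (mk_image_le.trans (Cardinal.mk_Iio_ordinal μ).le)

end Gap

lemma otype_supBelowSet_le {b : Ordinal → Ordinal} {μ η β : Ordinal} :
    otype (supBelowSet μ η b β) ≤ μ :=
  otype_le_of_subset_image supBelow_mono inter_subset_right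

lemma exists_surjOn_Iio_card_ord (θ : Ordinal.{u}) :
    ∃ b : Ordinal.{u} → Ordinal.{u}, SurjOn b (Iio θ.card.ord) (Iio θ) := by
  obtain ⟨e⟩ : Nonempty (Iio θ.card.ord ≃ Iio θ) :=
    Cardinal.eq.1 (by rw [Cardinal.mk_Iio_ordinal, Cardinal.mk_Iio_ordinal, card_ord])
  classical
  refine ⟨fun x => if h : x ∈ Iio θ.card.ord then e ⟨x, h⟩ else 0, fun y hy => ?_⟩
  exact ⟨e.symm ⟨y, hy⟩, (e.symm ⟨y, hy⟩).2, by simp⟩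

noncomputable def enumBelow (θ : Ordinal.{u}) : Ordinal.{u} → Ordinal.{u} :=
  Classical.choose (exists_surjOn_Iio_card_ord θ)

lemma surjOn_enumBelow (θ : Ordinal.{u}) : SurjOn (enumBelow θ) (Iio θ.card.ord) (Iio θ) :=
  Classical.choose_spec (exists_surjOn_Iio_card_ord θ)

/-- `C' β` for `β` in the gap `(η, θ)` of `A`: it depends on `β` only through the gap, which is
what makes it coherent. -/
noncomputable def gapFill (η θ β : Ordinal.{u}) : Set Ordinal.{u} :=
  supBelowSet θ.card.ord (max η ω) (enumBelow θ) β

lemma inter_Iio_eq_and_inter_Ioi_eq {A : Set Ordinal.{u}} {γ β : Ordinal.{u}} (hγβ : γ ≤ β)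
    (hβA : β ∉ A) (hγ : sSup (A ∩ Iio β) < γ) :
    A ∩ Iio γ = A ∩ Iio β ∧ A ∩ Ioi γ = A ∩ Ioi β := by
  have hgap : ∀ a ∈ A, a < β → a < γ := fun a ha haβ =>
    (le_sSup_inter_Iio ha haβ).trans_lt hγ
  constructor <;> ext a <;> constructor
  · exact fun ⟨ha, haγ⟩ => ⟨ha, haγ.trans_le hγβ⟩
  · exact fun ⟨ha, haβ⟩ => ⟨ha, hgap a ha haβ⟩
  · refine fun ⟨ha, hγa⟩ => ⟨ha, show β < a from lt_of_le_of_ne (le_of_not_gt fun haβ => ?_) ?_⟩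
    · exact (hgap a ha haβ).not_gt hγa
    · rintro rfl; exact hβA ha
  · exact fun ⟨ha, hβa⟩ => ⟨ha, hγβ.trans_lt hβa⟩

def IsClubInSuccCardinals (A : Set Ordinal.{u}) : Prop :=
  ∀ κ : Cardinal.{u}, ℵ₀ ≤ κ → IsClubIn (A ∩ Iio (succ κ).ord) (succ κ).ord

namespace IsClubInSuccCardinals

variable {A : Set Ordinal.{u}} {β : Ordinal.{u}}

lemma mem_of_sSup_eq (hA : IsClubInSuccCardinals A) (hβ : ω ≤ β) (h : sSup (A ∩ Iio β) = β) :
    β ∈ A := by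
  have hβκ : β < (succ β.card).ord := lt_ord.2 (lt_succ _)
  refine ((hA β.card (aleph0_le_card.2 hβ)).2.1 β hβκ ⟨omega0_pos.trans_le hβ, ?_⟩).1
  rw [inter_assoc, Iio_inter_Iio, inf_eq_right.2 hβκ.le, h]

lemma exists_mem_Ioo (hA : IsClubInSuccCardinals A) (hβ : ω ≤ β) :
    ∃ a ∈ A, β < a ∧ a < (succ β.card).ord := by
  obtain ⟨a, ⟨haA, ha⟩, hβa⟩ := exists_lt_of_lt_csSup'
    ((lt_ord.2 (lt_succ β.card)).trans_eq (hA β.card (aleph0_le_card.2 hβ)).2.2.symm)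
  exact ⟨a, haA, hβa, ha⟩

lemma ord_mem (hA : IsClubInSuccCardinals A) {κ : Cardinal.{u}} (hκ : ℵ₀ < κ) : κ.ord ∈ A := by
  have hωκ : ω < κ.ord := ord_aleph0 ▸ ord_lt_ord.2 hκ
  refine hA.mem_of_sSup_eq hωκ.le
    (csSup_eq_of_forall_le_of_forall_lt_exists_gt' (fun _ h => h.2.le) fun x hx => ?_)
  obtain ⟨a, haA, hxa, haκ⟩ := hA.exists_mem_Ioo (le_max_right x ω)
  have hcard : (max x ω).card < κ := lt_ord.1 (max_lt hx hωκ)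
  exact ⟨a, ⟨haA, haκ.trans_le (ord_le_ord.2 (succ_le_of_lt hcard))⟩,
    (le_max_left _ _).trans_lt hxa⟩

lemma sSup_inter_Iio_lt (hA : IsClubInSuccCardinals A) (hβ : ω ≤ β) (hβA : β ∉ A) :
    sSup (A ∩ Iio β) < β :=
  (csSup_le' fun _ h => h.2.le).lt_of_ne fun h => hβA (hA.mem_of_sSup_eq hβ h)

lemma lt_sInf_inter_Ioi (hA : IsClubInSuccCardinals A) (hβ : ω ≤ β) :
    β < sInf (A ∩ Ioi β) ∧ (sInf (A ∩ Ioi β)).card ≤ β.card := by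
  obtain ⟨a, haA, hβa, ha⟩ := hA.exists_mem_Ioo hβ
  exact ⟨(csInf_mem (s := A ∩ Ioi β) ⟨a, haA, hβa⟩).2,
    lt_succ_iff.1 (lt_ord.1 ((csInf_le' (s := A ∩ Ioi β) ⟨haA, hβa⟩).trans_lt ha))⟩

lemma ord_card_sInf_le (hA : IsClubInSuccCardinals A) (hβ : ω ≤ β) (hβA : β ∉ A) :
    (sInf (A ∩ Ioi β)).card.ord ≤ max (sSup (A ∩ Iio β)) ω := by
  have hcard := ord_le_ord.2 (hA.lt_sInf_inter_Ioi hβ).2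
  rcases (aleph0_le_card.2 hβ).eq_or_lt with h | h
  · rw [← h, ord_aleph0] at hcard
    exact hcard.trans (le_max_right _ _)
  · have hmem := hA.ord_mem h
    have hlt : β.card.ord < β := (ord_card_le β).lt_of_ne fun e => hβA (e ▸ hmem)
    exact hcard.trans ((le_sSup_inter_Iio hmem hlt).trans (le_max_left _ _))

end IsClubInSuccCardinals

def IsGlobalSquareAt (C' : Ordinal.{0} → Set Ordinal.{0}) (β : Ordinal.{0}) : Prop :=
  (C' β ⊆ Iio β ∧ ClosedIn (C' β) β ∧ UnboundedIn (C' β) β) ∧ otype (C' β) < β ∧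
    ∀ γ < β, IsLimitPt (C' β) γ → IsSingLimit γ ∧ C' γ = C' β ∩ Iio γ

open scoped Classical in
noncomputable def squareExtension (A : Set Ordinal.{0}) (C : Ordinal.{0} → Set Ordinal.{0})
    (β : Ordinal.{0}) : Set Ordinal.{0} :=
  if β ∈ A then (if UnboundedIn (C β) β then C β else ladder β)
  else gapFill (sSup (A ∩ Iio β)) (sInf (A ∩ Ioi β)) β

section Extension

variable {A : Set Ordinal.{0}} {C : Ordinal.{0} → Set Ordinal.{0}} {β : Ordinal.{0}}

lemma isGlobalSquareAt_of_unboundedIn (hsq : IsCoherentSquare {ν | ν ∈ A ∧ IsSingLimit ν} C)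
    (hβA : β ∈ A) (hβ : IsSingLimit β) (hC : UnboundedIn (C β) β) :
    IsGlobalSquareAt (squareExtension A C) β := by
  obtain ⟨hsing, hclosed, hotype, hcoh⟩ := hsq
  have hext : ∀ {ν}, ν ∈ A → UnboundedIn (C ν) ν → squareExtension A C ν = C ν :=
    fun hν hCν => by simp [squareExtension, hν, hCν]
  rw [IsGlobalSquareAt, hext hβA hC]
  refine ⟨⟨(hclosed β ⟨hβA, hβ⟩).1, (hclosed β ⟨hβA, hβ⟩).2.1, hC⟩, hotype β ⟨hβA, hβ⟩,
    fun γ hγβ hγ => ?_⟩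
  obtain ⟨hγS, hCγ⟩ := hcoh β ⟨hβA, hβ⟩ γ hγβ hγ
  have hγC : UnboundedIn (C γ) γ := by rw [UnboundedIn, hCγ, ← hγ.2]
  exact ⟨hsing γ hγS, by rw [hext hγS.1 hγC, hCγ]⟩

lemma isGlobalSquareAt_of_not_unboundedIn
    (hsq : IsCoherentSquare {ν | ν ∈ A ∧ IsSingLimit ν} C) (hβA : β ∈ A) (hβ : IsSingLimit β)
    (hC : ¬UnboundedIn (C β) β) : IsGlobalSquareAt (squareExtension A C) β := by
  have hcof : β.cof = ℵ₀ := (le_of_not_gt fun h => hC ((hsq.2.1 β ⟨hβA, hβ⟩).2.2 h)).antisymm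
    (aleph0_le_cof_iff.2 (one_lt_cof_iff.2 hβ.1))
  obtain ⟨hsub, hsup, hot, hnolim⟩ := isLadder_ladder hβ.1 hcof
  have hext : squareExtension A C β = ladder β := by simp [squareExtension, hβA, hC]
  rw [IsGlobalSquareAt, hext]
  exact ⟨⟨hsub, fun γ hγ h => absurd h (hnolim γ hγ), hsup⟩, hot.trans_lt hβ.omega0_lt,
    fun γ hγ h => absurd h (hnolim γ hγ)⟩

lemma isGlobalSquareAt_of_notMem (hA : IsClubInSuccCardinals A) (hβ : IsSingLimit β)
    (hβA : β ∉ A) : IsGlobalSquareAt (squareExtension A C) β := by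
  have hω := hβ.omega0_lt.le
  set η := sSup (A ∩ Iio β)
  set θ := sInf (A ∩ Ioi β)
  have hβθ : β < θ := (hA.lt_sInf_inter_Ioi hω).1
  have hθη : θ.card.ord ≤ max η ω := hA.ord_card_sInf_le hω hβA
  have hηβ : max η ω < β := max_lt (hA.sSup_inter_Iio_lt hω hβA) hβ.omega0_lt
  have hμ : IsSuccLimit θ.card.ord := isSuccLimit_ord (aleph0_le_card.2 (hω.trans hβθ.le))
  have hb : SurjOn (enumBelow θ) (Iio θ.card.ord) (Iio β) :=
    (surjOn_enumBelow θ).mono subset_rfl (Iio_subset_Iio hβθ.le)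
  have hext : ∀ {γ}, γ ∉ A → max η ω < γ → γ ≤ β → squareExtension A C γ = gapFill η θ γ := by
    intro γ hγA hηγ hγβ
    obtain ⟨hIio, hIoi⟩ := inter_Iio_eq_and_inter_Ioi_eq hγβ hβA ((le_max_left _ _).trans_lt hηγ)
    simp only [squareExtension, if_neg hγA, hIio, hIoi, η, θ]
  rw [IsGlobalSquareAt, hext hβA hηβ le_rfl]
  refine ⟨⟨fun _ h => h.1.2, closedIn_supBelowSet hμ hβ.1 hb,
    unboundedIn_supBelowSet hμ hβ.1 hb hηβ⟩,
    otype_supBelowSet_le.trans_lt (hθη.trans_lt hηβ), fun γ hγβ hγ => ?_⟩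
  have hηγ : max η ω < γ := (closedIn_supBelowSet hμ hβ.1 hb γ hγβ hγ).1.1
  have hγA : γ ∉ A := fun h =>
    (le_sSup_inter_Iio h hγβ).not_gt ((le_max_left _ _).trans_lt hηγ)
  have hcof : γ.cof ≤ θ.card := by
    simpa using lift_le.1 (hγ.lift_cof_le_mk.trans mk_supBelowSet_le)
  refine ⟨⟨hγ.isSuccLimit, ((ord_le_ord.2 hcof).trans hθη).trans_lt hηγ⟩, ?_⟩
  rw [hext hγA hηγ hγβ.le]
  exact supBelowSet_eq_inter_Iio hμ hβ.1 hb hγβ hγ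

end Extension

theorem globalSquare_of_square_on_club_class_general
    (A : Set Ordinal)
    (hclub : ∀ κ : Cardinal, Cardinal.aleph0 ≤ κ →
      IsClubIn (A ∩ Set.Iio (Order.succ κ).ord) (Order.succ κ).ord)
    (C : Ordinal → Set Ordinal)
    (hsq : IsCoherentSquare {ν | ν ∈ A ∧ IsSingLimit ν} C) :
    ∃ C' : Ordinal → Set Ordinal, ∀ β, IsSingLimit β →
      (C' β ⊆ Set.Iio β ∧ ClosedIn (C' β) β ∧ UnboundedIn (C' β) β) ∧
      otype (C' β) < β ∧
      (∀ γ < β, IsLimitPt (C' β) γ → IsSingLimit γ ∧ C' γ = C' β ∩ Set.Iio γ) := by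
  refine ⟨squareExtension A C, fun β hβ => ?_⟩
  by_cases hβA : β ∈ A
  · by_cases hC : UnboundedIn (C β) β
    · exact isGlobalSquareAt_of_unboundedIn hsq hβA hβ hC
    · exact isGlobalSquareAt_of_not_unboundedIn hsq hβA hβ hC
  · exact isGlobalSquareAt_of_notMem hclub hβ hβA

/-- A coherent square sequence defined on the singular limit ordinals of a
class `A` containing all singular cardinals and club in every successor
cardinal can be filled out to a Global Square sequence defined on all
singular limit ordinals. -/
theorem globalSquare_of_square_on_club_class
    (A : Set Ordinal)
    (hsing : ∀ c : Cardinal, Cardinal.aleph0 ≤ c → c.ord.cof < c → c.ord ∈ A)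
    (hclub : ∀ κ : Cardinal, Cardinal.aleph0 ≤ κ →
      IsClubIn (A ∩ Set.Iio (Order.succ κ).ord) (Order.succ κ).ord)
    (C : Ordinal → Set Ordinal)
    (hsq : IsCoherentSquare {ν | ν ∈ A ∧ IsSingLimit ν} C) :
    ∃ C' : Ordinal → Set Ordinal, ∀ β, IsSingLimit β →
      (C' β ⊆ Set.Iio β ∧ ClosedIn (C' β) β ∧ UnboundedIn (C' β) β) ∧
      otype (C' β) < β ∧
      (∀ γ < β, IsLimitPt (C' β) γ → IsSingLimit γ ∧ C' γ = C' β ∩ Set.Iio γ) :=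
  globalSquare_of_square_on_club_class_general A hclub C hsq
end

section
/- Let α be an ordinal with ω^α = α in ordinal arithmetic (every primitive recursively closed ordinal has this property). Then the relation <* is a well-order on the collection [α]^{<ω} of finite subsets of α, and the order type of ([α]^{<ω}, <*) is exactly α. -/
open Ordinal Cardinal Set

/-- The ordering `<*` on finite sets of ordinals:
`u <* v` iff `u ≠ v` and the maximum of the symmetric difference `u ∆ v`
belongs to `v`. -/
def ltStar (u v : Finset Ordinal) : Prop :=
  u ≠ v ∧ ∃ m : Ordinal, (symmDiff u v).max = (m : WithBot Ordinal) ∧ m ∈ v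

/-!
Sending a finite set `u` of ordinals to `∑_{x ∈ u} 2 ^ x`, summed in decreasing order, is
the base-`2` Cantor normal form: it is a bijection from the finite subsets of `b` onto
`2 ^ b`. It turns `<*` into `<`: if `m = max (u ∆ v) ∈ v`, then `u` and `v` agree above `m`,
while the part of `v` up to `m` contributes at least `2 ^ m` and the part of `u` below `m`
less than `2 ^ m`. Hence `<*` has order type `2 ^ b` on the finite subsets of `b`, and
`2 ^ α = α` whenever `ω ^ α = α`.
-/

noncomputable def twoPowSum (u : Finset Ordinal) : Ordinal :=
  (u.sort (· ≥ ·)).foldr (fun a r => 2 ^ a + r) 0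

@[simp]
lemma twoPowSum_empty : twoPowSum ∅ = 0 := by
  simp [twoPowSum]

lemma twoPowSum_insert {a : Ordinal} {u : Finset Ordinal} (h : ∀ x ∈ u, x < a) :
    twoPowSum (insert a u) = 2 ^ a + twoPowSum u := by
  rw [twoPowSum, Finset.sort_insert _ (fun b hb => (h b hb).le) fun ha => (h a ha).false]
  rfl

lemma twoPowSum_union {s t : Finset Ordinal} (h : ∀ x ∈ s, ∀ y ∈ t, y < x) :
    twoPowSum (s ∪ t) = twoPowSum s + twoPowSum t := by
  induction s using Finset.induction_on_max with
  | empty => simp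
  | insert a s hs ih =>
    have hst : ∀ x ∈ s ∪ t, x < a := by
      simp only [Finset.mem_union]
      rintro x (hx | hx)
      · exact hs x hx
      · exact h a (Finset.mem_insert_self a s) x hx
    rw [Finset.insert_union, twoPowSum_insert hst, twoPowSum_insert hs,
      ih fun x hx => h x (Finset.mem_insert_of_mem hx), add_assoc]

lemma two_opow_succ (a : Ordinal) : (2 : Ordinal) ^ Order.succ a = 2 ^ a + 2 ^ a := by
  rw [opow_succ, Ordinal.mul_two]

lemma twoPowSum_lt_two_opow {b : Ordinal} {u : Finset Ordinal} (h : ∀ x ∈ u, x < b) :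
    twoPowSum u < 2 ^ b := by
  induction u using Finset.induction_on_max generalizing b with
  | empty => simpa using opow_pos b two_pos
  | insert a s hs ih =>
    have hab : a < b := h a (Finset.mem_insert_self a s)
    calc twoPowSum (insert a s) = 2 ^ a + twoPowSum s := twoPowSum_insert hs
      _ < 2 ^ a + 2 ^ a := add_lt_add_right (ih hs) _
      _ = 2 ^ Order.succ a := (two_opow_succ a).symm
      _ ≤ 2 ^ b := opow_le_opow_right two_pos (Order.succ_le_of_lt hab)

lemma two_opow_le_twoPowSum {a : Ordinal} {u : Finset Ordinal} (h : a ∈ u) :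
    2 ^ a ≤ twoPowSum u := by
  induction u using Finset.induction_on_max with
  | empty => simp at h
  | insert b s hs ih =>
    rw [twoPowSum_insert hs]
    rcases Finset.mem_insert.mp h with rfl | h
    · exact le_self_add
    · exact (ih h).trans le_add_self

lemma twoPowSum_eq_add_filter (m : Ordinal) (u : Finset Ordinal) :
    twoPowSum u = twoPowSum (u.filter (m < ·)) + twoPowSum (u.filter (· ≤ m)) := by
  rw [← twoPowSum_union]
  · congr 1
    ext x
    simp only [Finset.mem_union, Finset.mem_filter, ← and_or_left, lt_or_ge, and_true]
  · simp only [Finset.mem_filter]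
    exact fun x hx y hy => hy.2.trans_lt hx.2
lemma ltStar.twoPowSum_lt {u v : Finset Ordinal} (h : ltStar u v) :
    twoPowSum u < twoPowSum v := by
  obtain ⟨-, m, hmax, hmv⟩ := h
  have hmu : m ∉ u := fun hmu => by
    have := Finset.mem_of_max hmax
    rw [Finset.mem_symmDiff] at this
    tauto
  have hhigh : u.filter (m < ·) = v.filter (m < ·) := by
    ext x
    simp only [Finset.mem_filter]
    refine and_congr_left fun hx => ?_
    by_contra hne
    have hx' : x ∈ symmDiff u v := by rw [Finset.mem_symmDiff]; tauto
    exact (Finset.le_max_of_eq hx' hmax).not_gt hx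
  have hlow : twoPowSum (u.filter (· ≤ m)) < twoPowSum (v.filter (· ≤ m)) := by
    have hu : ∀ x ∈ u.filter (· ≤ m), x < m := by
      simp only [Finset.mem_filter]
      exact fun x hx => hx.2.lt_of_ne fun hxm => hmu (hxm ▸ hx.1)
    calc _ < 2 ^ m := twoPowSum_lt_two_opow hu
      _ ≤ _ := two_opow_le_twoPowSum (u := v.filter (· ≤ m)) (by simp [hmv])
  rw [twoPowSum_eq_add_filter m u, twoPowSum_eq_add_filter m v, hhigh]
  exact add_lt_add_right hlow _

lemma ltStar_or_ltStar_of_ne {u v : Finset Ordinal} (h : u ≠ v) : ltStar u v ∨ ltStar v u := by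
  have hne : (symmDiff u v).Nonempty :=
    Finset.nonempty_iff_ne_empty.mpr fun he => h (symmDiff_eq_bot.mp he)
  obtain ⟨m, hm⟩ := Finset.max_of_nonempty hne
  rcases Finset.mem_symmDiff.mp (Finset.mem_of_max hm) with ⟨hmu, -⟩ | ⟨hmv, -⟩
  · exact Or.inr ⟨h.symm, m, symmDiff_comm u v ▸ hm, hmu⟩
  · exact Or.inl ⟨h, m, hm, hmv⟩

lemma ltStar_iff_twoPowSum_lt {u v : Finset Ordinal} :
    ltStar u v ↔ twoPowSum u < twoPowSum v := by
  refine ⟨ltStar.twoPowSum_lt, fun h => ?_⟩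
  have hne : u ≠ v := by rintro rfl; exact h.false
  exact (ltStar_or_ltStar_of_ne hne).resolve_right fun h' => h.asymm h'.twoPowSum_lt

lemma twoPowSum_injective : Function.Injective twoPowSum := by
  intro u v h
  by_contra hne
  rcases ltStar_or_ltStar_of_ne hne with h' | h'
  · exact h'.twoPowSum_lt.ne h
  · exact h'.twoPowSum_lt.ne h.symm

lemma exists_twoPowSum_eq {o b : Ordinal} (ho : o < 2 ^ b) :
    ∃ u : Finset Ordinal, (∀ x ∈ u, x < b) ∧ twoPowSum u = o := by
  induction o using WellFoundedLT.induction generalizing b with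
  | _ o ih =>
  rcases eq_or_ne o 0 with rfl | ho0
  · exact ⟨∅, by simp, twoPowSum_empty⟩
  set a := Ordinal.log 2 o
  have hao : 2 ^ a ≤ o := opow_log_le_self 2 ho0
  have hsum : 2 ^ a + (o - 2 ^ a) = o := Ordinal.add_sub_cancel_of_le hao
  have hrest : o - 2 ^ a < 2 ^ a := by
    have ho' : o < 2 ^ a + 2 ^ a := two_opow_succ a ▸ lt_opow_succ_log_self one_lt_two o
    rw [← hsum] at ho'
    exact lt_of_add_lt_add_left ho'
  obtain ⟨u, hu, hou⟩ := ih _ (hrest.trans_le hao) hrest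
  have hab : a < b := (opow_lt_opow_iff_right one_lt_two).mp (hao.trans_lt ho)
  refine ⟨insert a u, ?_, by rw [twoPowSum_insert hu, hou, hsum]⟩
  simp only [Finset.mem_insert, forall_eq_or_imp]
  exact ⟨hab, fun x hx => (hu x hx).trans hab⟩

noncomputable def ltStarRelIsoIio (b : Ordinal) :
    (fun u v : {u : Finset Ordinal // ∀ x ∈ u, x < b} => ltStar u.1 v.1) ≃r
      ((· < ·) : Iio ((2 : Ordinal) ^ b) → Iio ((2 : Ordinal) ^ b) → Prop) where
  toEquiv := Equiv.ofBijective (fun u => ⟨twoPowSum u.1, twoPowSum_lt_two_opow u.2⟩)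
    ⟨fun _ _ h => Subtype.ext (twoPowSum_injective (congrArg Subtype.val h)),
      fun o =>
        let ⟨u, hu, hou⟩ := exists_twoPowSum_eq o.2
        ⟨⟨u, hu⟩, Subtype.ext hou⟩⟩
  map_rel_iff' := ltStar_iff_twoPowSum_lt.symm

instance (b : Ordinal) :
    IsWellOrder {u : Finset Ordinal // ∀ x ∈ u, x < b} (fun u v => ltStar u.1 v.1) :=
  (ltStarRelIsoIio b).toRelEmbedding.isWellOrder

theorem type_ltStar (b : Ordinal.{u}) :
    type (fun u v : {u : Finset Ordinal // ∀ x ∈ u, x < b} => ltStar u.1 v.1) =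
      lift.{u + 1} (2 ^ b) := by
  rw [(ltStarRelIsoIio b).ordinalType_congr, type_lt_Iio]

lemma two_opow_eq_self_of_omega0_opow_eq_self {α : Ordinal} (hα : ω ^ α = α) : 2 ^ α = α :=
  le_antisymm ((opow_le_opow_left α (natCast_lt_omega0 2).le).trans_eq hα)
    (right_le_opow α one_lt_two)

/-- If `ω ^ α = α`, then `<*` well-orders the finite subsets of `α`
in order type exactly `α`. -/
theorem ltStar_type_eq_of_omega_opow_eq
    (α : Ordinal) (hα : Ordinal.omega0 ^ α = α) :
    ∃ hwo : IsWellOrder {u : Finset Ordinal // ∀ x ∈ u, x < α}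
        (fun u v => ltStar u.1 v.1),
      @Ordinal.type {u : Finset Ordinal // ∀ x ∈ u, x < α} (fun u v => ltStar u.1 v.1) hwo = Ordinal.lift.{1, 0} α := by
  refine ⟨inferInstance, ?_⟩
  rw [type_ltStar, two_opow_eq_self_of_omega0_opow_eq_self hα]
end

section
/- Let λ be an ordinal and let (f_m)_{m<ω} be a countable family of finitary functions f_m : λ^{r_m} → λ such that: (1) the family contains all coordinate projections and is closed under composition (hence the closure of any set Y ⊆ λ under the family equals {f_m(y⃗) : m < ω, y⃗ ∈ Y^{r_m}}); and (2) for every m and every l ≤ r_m there is m′ such that for all x⃗ ∈ λ^{r_m−l} and all ordinals κ, θ < λ, f_{m′}(x⃗, κ, θ) = sup{ f_m(ξ⃗, x⃗) : ξ⃗ ∈ κ^l and f_m(ξ⃗, x⃗) < θ } (taken as 0 if this set is empty). Let X₀ ⊆ λ be closed under all the f_m, let κ ∈ X₀ be an infinite cardinal, and let X be the closure of X₀ ∪ κ under all the f_m. Then for every regular cardinal θ ∈ X₀ with κ < θ < λ, one has sup(X ∩ θ) = sup(X₀ ∩ θ). In other words, adjoining all ordinals below κ to the hull X₀ does not increase the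 supremum of the hull below any regular cardinal θ ∈ X₀ above κ. -/
open Ordinal Cardinal Set

/-- `Y` is closed under every function of the finitary family `f` (with arities `r`). -/
def ClosedUnder (r : ℕ → ℕ) (f : (m : ℕ) → (Fin (r m) → Ordinal) → Ordinal)
    (Y : Set Ordinal) : Prop :=
  ∀ m (x : Fin (r m) → Ordinal), (∀ i, x i ∈ Y) → f m x ∈ Y

/-- The closure of `B` under the finitary family `f`: the smallest superset of `B`
closed under every function of the family. -/
def famClosure (r : ℕ → ℕ) (f : (m : ℕ) → (Fin (r m) → Ordinal) → Ordinal)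
    (B : Set Ordinal) : Set Ordinal :=
  ⋂₀ {Y : Set Ordinal | B ⊆ Y ∧ ClosedUnder r f Y}

/-- Concatenation of two tuples of ordinals, recast to the appropriate arity. -/
def appendT {a b c : ℕ} (h : a + b = c) (x : Fin a → Ordinal) (y : Fin b → Ordinal) :
    Fin c → Ordinal :=
  fun i => Fin.append x y (Fin.cast h.symm i)

/-- A tuple followed by two extra ordinal arguments, recast to the appropriate arity. -/
def appendTwo {a c : ℕ} (h : a + 2 = c) (x : Fin a → Ordinal) (κ θ : Ordinal) :
    Fin c → Ordinal :=
  fun i => Fin.append x ![κ, θ] (Fin.cast h.symm i)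

universe u

/-!
After sorting its arguments (projections and composition allow any reindexing), an element of
the closure of `X₀ ∪ κ` is a value `f_m(ξ⃗, x⃗)` with `ξ⃗ ∈ κ^l` and `x⃗` in `X₀`. If it lies below
`θ`, it is bounded by `f_{m'}(x⃗, κ, θ) = sup {f_m(ξ⃗', x⃗) < θ : ξ⃗' ∈ κ^l}`. This bound lies in
`X₀`, which is closed and contains `x⃗`, `κ` and `θ`, and it lies below `θ`, being a supremum of
at most `κ < cf θ` ordinals below `θ`.
-/

def ContainsProjections (r : ℕ → ℕ) (f : (m : ℕ) → (Fin (r m) → Ordinal) → Ordinal) : Prop :=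
  ∀ (k : ℕ) (i : Fin k), ∃ m, ∃ h : r m = k,
    ∀ x : Fin (r m) → Ordinal, f m x = x (Fin.cast h.symm i)

def ClosedUnderComp (r : ℕ → ℕ) (f : (m : ℕ) → (Fin (r m) → Ordinal) → Ordinal) : Prop :=
  ∀ (m k : ℕ) (g : Fin (r m) → ℕ) (hg : ∀ i, r (g i) = k),
    ∃ m', ∃ h : r m' = k, ∀ x : Fin k → Ordinal,
      f m' (fun j => x (Fin.cast h j)) =
        f m (fun i => f (g i) (fun j => x (Fin.cast (hg i) j)))

def HasBoundedSups (lam : Ordinal) (r : ℕ → ℕ)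
    (f : (m : ℕ) → (Fin (r m) → Ordinal) → Ordinal) : Prop :=
  ∀ (m l : ℕ) (hl : l ≤ r m), ∃ m', ∃ h : (r m - l) + 2 = r m',
    ∀ (x : Fin (r m - l) → Ordinal), (∀ i, x i < lam) →
    ∀ (κ θ : Ordinal), κ < lam → θ < lam →
      f m' (appendTwo h x κ θ) =
        sSup {z : Ordinal | ∃ ξ : Fin l → Ordinal, (∀ i, ξ i < κ) ∧
          z = f m (appendT (Nat.add_sub_cancel' hl) ξ x) ∧ z < θ}

def famValues (r : ℕ → ℕ) (f : (m : ℕ) → (Fin (r m) → Ordinal) → Ordinal)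
    (B : Set Ordinal) : Set Ordinal :=
  {z | ∃ m, ∃ w : Fin (r m) → Ordinal, (∀ i, w i ∈ B) ∧ f m w = z}

section Closure

variable {r : ℕ → ℕ} {f : (m : ℕ) → (Fin (r m) → Ordinal) → Ordinal}

theorem subset_famClosure (B : Set Ordinal) : B ⊆ famClosure r f B :=
  fun _ hy _ hY => hY.1 hy

theorem ClosedUnderComp.exists_reindex (hproj : ContainsProjections r f)
    (hcomp : ClosedUnderComp r f) (m k : ℕ) (σ : Fin (r m) → Fin k) :
    ∃ m', ∃ h : r m' = k, ∀ y : Fin k → Ordinal,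
      f m' (fun j => y (Fin.cast h j)) = f m (y ∘ σ) := by
  choose p hp hpe using hproj k
  obtain ⟨m', h, he⟩ := hcomp m k (fun i => p (σ i)) (fun i => hp (σ i))
  refine ⟨m', h, fun y => ?_⟩
  simp only [he, hpe, Fin.cast_cast, Fin.cast_eq_self, Function.comp_def]

theorem closedUnder_famValues (hproj : ContainsProjections r f)
    (hcomp : ClosedUnderComp r f) (B : Set Ordinal) :
    ClosedUnder r f (famValues r f B) := by
  intro m x hx
  choose M w hw hxw using hx
  let E := finSigmaFinEquiv (n := fun i => r (M i))
  let W : Fin (∑ i, r (M i)) → Ordinal := fun j => w (E.symm j).1 (E.symm j).2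
  choose m' h' he' using fun i => hcomp.exists_reindex hproj (M i) _ (fun t => E ⟨i, t⟩)
  obtain ⟨ms, hs, hes⟩ := hcomp m _ m' h'
  refine ⟨ms, fun j => W (Fin.cast hs j), fun j => hw _ _, ?_⟩
  rw [hes W]
  congr 1
  funext i
  rw [he' i W, ← hxw i]
  congr 1
  funext t
  exact congrArg (fun p => w p.1 p.2) (E.symm_apply_apply ⟨i, t⟩)

theorem famClosure_subset_famValues (hproj : ContainsProjections r f)
    (hcomp : ClosedUnderComp r f) (B : Set Ordinal) :
    famClosure r f B ⊆ famValues r f B := by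
  refine sInter_subset_of_mem ⟨fun y hy => ?_, closedUnder_famValues hproj hcomp B⟩
  obtain ⟨m, h, he⟩ := hproj 1 0
  exact ⟨m, fun _ => y, fun _ => hy, he _⟩

theorem exists_apply_appendT_eq (hproj : ContainsProjections r f)
    (hcomp : ClosedUnderComp r f) {A B : Set Ordinal} {m : ℕ} (w : Fin (r m) → Ordinal)
    (hw : ∀ i, w i ∈ A ∪ B) :
    ∃ m' l l', ∃ h : l + l' = r m', ∃ ξ : Fin l → Ordinal, ∃ x : Fin l' → Ordinal,
      (∀ i, ξ i ∈ A) ∧ (∀ j, x j ∈ B) ∧ f m' (appendT h ξ x) = f m w := by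
  classical
  let P i := w i ∈ A
  let E : Fin (r m) ≃ Fin (Fintype.card {i // P i} + Fintype.card {i // ¬P i}) :=
    (Equiv.sumCompl P).symm.trans
      ((Equiv.sumCongr (Fintype.equivFin _) (Fintype.equivFin _)).trans finSumFinEquiv)
  obtain ⟨m', h, he⟩ := hcomp.exists_reindex hproj m _ E
  let y := w ∘ E.symm
  refine ⟨m', _, _, h.symm, y ∘ Fin.castAdd _, y ∘ Fin.natAdd _, fun a => ?_, fun b => ?_, ?_⟩
  · simpa [y, E] using ((Fintype.equivFin _).symm a).2
  · simpa [y, E] using (hw _).resolve_left ((Fintype.equivFin _).symm b).2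
  · have happ : Fin.append (y ∘ Fin.castAdd _) (y ∘ Fin.natAdd _) = y := Fin.append_castAdd_natAdd
    unfold appendT
    rw [happ, he, Function.comp_assoc, E.symm_comp_self, Function.comp_id]

end Closure

theorem sSup_apply_lt_of_lt_cof {κ θ : Ordinal.{u}} (hκ : ω ≤ κ) (hκθ : κ < θ)
    (hθ : θ.cof.ord = θ) {l : ℕ} (g : (Fin l → Ordinal.{u}) → Ordinal.{u}) :
    sSup {z | ∃ ξ : Fin l → Ordinal, (∀ i, ξ i < κ) ∧ z = g ξ ∧ z < θ} < θ := by
  refine sSup_lt_of_lt_cof ?_ fun _ ⟨_, _, _, hz⟩ => hz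
  have hsub : {z | ∃ ξ : Fin l → Ordinal, (∀ i, ξ i < κ) ∧ z = g ξ ∧ z < θ} ⊆
      range fun ξ : Fin l → Iio κ => g fun i => ξ i := by
    rintro _ ⟨ξ, hξ, rfl, -⟩
    exact ⟨fun i => ⟨ξ i, hξ i⟩, rfl⟩
  have hκ' : ℵ₀ ≤ Cardinal.lift.{u + 1} κ.card := by
    rw [aleph0_le_lift, ← card_omega0]
    exact card_le_card hκ
  calc _ ≤ #(Fin l → Iio κ) := (mk_le_mk_of_subset hsub).trans mk_range_le
    _ = Cardinal.lift.{u + 1} κ.card ^ l := by simp [Cardinal.mk_Iio_ordinal]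
    _ ≤ Cardinal.lift.{u + 1} κ.card := power_nat_le hκ'
    _ < (Ordinal.lift.{u + 1} θ).cof := by
      rw [← lift_cof, Cardinal.lift_lt, ← lt_ord, hθ]
      exact hκθ

theorem appendTwo_mem {a c : ℕ} (h : a + 2 = c) {x : Fin a → Ordinal} {κ θ : Ordinal}
    {Y : Set Ordinal} (hx : ∀ i, x i ∈ Y) (hκ : κ ∈ Y) (hθ : θ ∈ Y) (i : Fin c) :
    appendTwo h x κ θ i ∈ Y := by
  unfold appendTwo
  induction Fin.cast h.symm i using Fin.addCases with
  | left j => simpa using hx j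
  | right j => fin_cases j <;> simpa

theorem HasBoundedSups.apply_appendT_le_sSup {lam : Ordinal} {r : ℕ → ℕ}
    {f : (m : ℕ) → (Fin (r m) → Ordinal) → Ordinal} (hsup : HasBoundedSups lam r f)
    {X₀ : Set Ordinal} (hX₀lam : X₀ ⊆ Iio lam) (hX₀ : ClosedUnder r f X₀)
    {κ θ : Ordinal} (hκX : κ ∈ X₀) (hθX : θ ∈ X₀) (hκ : ω ≤ κ) (hκθ : κ < θ)
    (hθlam : θ < lam) (hθ : θ.cof.ord = θ)
    {m l l' : ℕ} (h : l + l' = r m) {ξ : Fin l → Ordinal} (hξ : ∀ i, ξ i < κ)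
    {x : Fin l' → Ordinal} (hx : ∀ j, x j ∈ X₀) (hz : f m (appendT h ξ x) < θ) :
    f m (appendT h ξ x) ≤ sSup (X₀ ∩ Iio θ) := by
  obtain rfl : l' = r m - l := by omega
  obtain ⟨m', h', hm'⟩ := hsup m l (by omega)
  have hS := hm' x (fun j => hX₀lam (hx j)) κ θ (hκθ.trans hθlam) hθlam
  have hsX : f m' (appendTwo h' x κ θ) ∈ X₀ := hX₀ _ _ (appendTwo_mem h' hx hκX hθX)
  have hsθ : f m' (appendTwo h' x κ θ) < θ := hS ▸ sSup_apply_lt_of_lt_cof hκ hκθ hθ _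
  calc f m (appendT h ξ x) ≤ f m' (appendTwo h' x κ θ) :=
        hS ▸ le_csSup (bddAbove_Iio.mono fun _ ⟨_, _, _, hlt⟩ => hlt) ⟨ξ, hξ, rfl, hz⟩
    _ ≤ sSup (X₀ ∩ Iio θ) := le_csSup (bddAbove_Iio.mono inter_subset_right) ⟨hsX, hsθ⟩

theorem hull_enlargement_sup_eq_general
    (lam : Ordinal) (r : ℕ → ℕ)
    (f : (m : ℕ) → (Fin (r m) → Ordinal) → Ordinal)
    (hproj : ∀ (k : ℕ) (i : Fin k), ∃ m, ∃ h : r m = k,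
      ∀ x : Fin (r m) → Ordinal, f m x = x (Fin.cast h.symm i))
    (hcomp : ∀ (m k : ℕ) (g : Fin (r m) → ℕ) (hg : ∀ i, r (g i) = k),
      ∃ m', ∃ h : r m' = k, ∀ x : Fin k → Ordinal,
        f m' (fun j => x (Fin.cast h j)) =
          f m (fun i => f (g i) (fun j => x (Fin.cast (hg i) j))))
    (hsup : ∀ (m l : ℕ) (hl : l ≤ r m), ∃ m', ∃ h : (r m - l) + 2 = r m',
      ∀ (x : Fin (r m - l) → Ordinal), (∀ i, x i < lam) →
      ∀ (kap θ : Ordinal), kap < lam → θ < lam →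
        f m' (appendTwo h x kap θ) =
          sSup {z : Ordinal | ∃ ξ : Fin l → Ordinal, (∀ i, ξ i < kap) ∧
            z = f m (appendT (Nat.add_sub_cancel' hl) ξ x) ∧ z < θ})
    (X₀ : Set Ordinal) (hX₀lam : X₀ ⊆ Set.Iio lam) (hX₀cl : ClosedUnder r f X₀)
    (kap : Ordinal) (hkapX : kap ∈ X₀) (hkapInf : Ordinal.omega0 ≤ kap) :
    ∀ θ ∈ X₀, kap < θ → θ < lam → θ.cof.ord = θ →
      sSup (famClosure r f (X₀ ∪ Set.Iio kap) ∩ Set.Iio θ) =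
        sSup (X₀ ∩ Set.Iio θ) := by
  intro θ hθX hκθ hθlam hθ
  refine le_antisymm (csSup_le' ?_) (csSup_le_csSup' (bddAbove_Iio.mono inter_subset_right)
    (inter_subset_inter_left _ (subset_union_left.trans (subset_famClosure _))))
  rintro _ ⟨hz, hzθ⟩
  obtain ⟨m, w, hw, rfl⟩ := famClosure_subset_famValues hproj hcomp _ hz
  obtain ⟨m', l, l', h, ξ, x, hξ, hx, hmw⟩ :=
    exists_apply_appendT_eq hproj hcomp w fun i => (hw i).symm
  rw [← hmw] at hzθ ⊢
  exact HasBoundedSups.apply_appendT_le_sSup hsup hX₀lam hX₀cl hkapX hθX hkapInf hκθ hθlam hθ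
    h hξ hx hzθ

/-- Hull-enlargement: if the countable finitary family `f` on `λ` contains all
coordinate projections, is closed under composition, and contains the bounded-sup
functions (2), and `X₀ ⊆ λ` is closed under the family with `κ ∈ X₀` an infinite
cardinal, then the closure `X` of `X₀ ∪ κ` under the family satisfies
`sup (X ∩ θ) = sup (X₀ ∩ θ)` for every regular cardinal `θ ∈ X₀` with `κ < θ < λ`. -/
theorem hull_enlargement_sup_eq
    (lam : Ordinal) (r : ℕ → ℕ)
    (f : (m : ℕ) → (Fin (r m) → Ordinal) → Ordinal)
    (hf : ∀ m (x : Fin (r m) → Ordinal), (∀ i, x i < lam) → f m x < lam)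
    (hproj : ∀ (k : ℕ) (i : Fin k), ∃ m, ∃ h : r m = k,
      ∀ x : Fin (r m) → Ordinal, f m x = x (Fin.cast h.symm i))
    (hcomp : ∀ (m k : ℕ) (g : Fin (r m) → ℕ) (hg : ∀ i, r (g i) = k),
      ∃ m', ∃ h : r m' = k, ∀ x : Fin k → Ordinal,
        f m' (fun j => x (Fin.cast h j)) =
          f m (fun i => f (g i) (fun j => x (Fin.cast (hg i) j))))
    (hsup : ∀ (m l : ℕ) (hl : l ≤ r m), ∃ m', ∃ h : (r m - l) + 2 = r m',
      ∀ (x : Fin (r m - l) → Ordinal), (∀ i, x i < lam) →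
      ∀ (kap θ : Ordinal), kap < lam → θ < lam →
        f m' (appendTwo h x kap θ) =
          sSup {z : Ordinal | ∃ ξ : Fin l → Ordinal, (∀ i, ξ i < kap) ∧
            z = f m (appendT (Nat.add_sub_cancel' hl) ξ x) ∧ z < θ})
    (X₀ : Set Ordinal) (hX₀lam : X₀ ⊆ Set.Iio lam) (hX₀cl : ClosedUnder r f X₀)
    (kap : Ordinal) (hkapX : kap ∈ X₀) (hkapInf : Ordinal.omega0 ≤ kap)
    (hkapCard : kap.card.ord = kap) :
    ∀ θ ∈ X₀, kap < θ → θ < lam → θ.cof.ord = θ →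
      sSup (famClosure r f (X₀ ∪ Set.Iio kap) ∩ Set.Iio θ) =
        sSup (X₀ ∩ Set.Iio θ) :=
  hull_enlargement_sup_eq_general lam r f hproj hcomp hsup X₀ hX₀lam hX₀cl kap hkapX hkapInf
end

section
/- Let β̄ be an ordinal and let π : β̄ → Ord be a strictly increasing function which is continuous at points of countable cofinality, i.e., for every limit ordinal δ < β̄ with cf(δ) = ω one has π(δ) = sup{π(ξ) : ξ < δ}. Let D ⊆ β̄ be a set of ordinals that is closed in sup(D) and has order type exactly ω₁. Then the image π''D = {π(δ) : δ ∈ D} is closed in sup(π''D) and has order type exactly ω₁. -/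
/-!
The restriction of `π` to `D` is an order isomorphism onto `π '' D`, so the order types agree.
For closedness, let `β < sup (π '' D)` be a limit point of `π '' D` and `A = {δ ∈ D | π δ < β}`.
Some `δ₀ ∈ D` has `β < π δ₀`, so `A ⊆ D ∩ δ₀` is countable because `D` has order type `ω₁`.
`A` has no largest element, so `δ = sup A` is a limit of countable cofinality, it lies in `D`
because `D` is closed, and continuity of `π` at `δ` gives `π δ = sup (π '' A) = β`.
-/

open Ordinal Cardinal Set

open Order

lemma lift_otype_of_ne_zero {s : Set Ordinal.{0}} (h : otype s ≠ 0) :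
    Ordinal.lift.{1} (otype s) = Ordinal.type (@Subrel Ordinal.{0} (· < ·) (· ∈ s)) := by
  refine csInf_mem (s := {o : Ordinal.{0} |
    Ordinal.lift.{1} o = Ordinal.type (@Subrel Ordinal.{0} (· < ·) (· ∈ s))})
    (Set.nonempty_iff_ne_empty.2 fun hemp => h ?_)
  rw [otype, hemp, Ordinal.sInf_empty]

lemma otype_image_of_strictMonoOn {f : Ordinal.{0} → Ordinal.{0}} {s : Set Ordinal.{0}}
    (hf : StrictMonoOn f s) : otype (f '' s) = otype s := by
  have htype : Ordinal.type (@Subrel Ordinal.{0} (· < ·) (· ∈ f '' s)) =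
      Ordinal.type (@Subrel Ordinal.{0} (· < ·) (· ∈ s)) :=
    (hf.orderIso f s).symm.toRelIsoLT.ordinalType_congr
  rw [otype, otype, htype]

lemma countable_inter_Iio_of_otype_eq_omega1 {D : Set Ordinal.{0}}
    (hot : otype D = (aleph 1).ord) {δ : Ordinal} (hδ : δ ∈ D) : (D ∩ Iio δ).Countable := by
  have htype := lift_otype_of_ne_zero (hot ▸ (ord_pos.2 (aleph_pos 1)).ne')
  have hlt := Ordinal.typein_lt_type (@Subrel Ordinal.{0} (· < ·) (· ∈ D)) ⟨δ, hδ⟩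
  rw [← htype, hot, lift_ord, lt_ord, card_typein, lift_aleph, Ordinal.lift_one,
    lt_aleph_one_iff] at hlt
  have hseg : D ∩ Iio δ = Subtype.val '' {y : D | y < ⟨δ, hδ⟩} := by
    ext x; simp [and_comm]
  rw [hseg]
  exact (le_aleph0_iff_set_countable.1 hlt).image _


section SupWithoutMax

variable {A : Set Ordinal.{u}}

lemma lt_sSup_of_sSup_notMem (hbdd : BddAbove A) (hA : sSup A ∉ A) {a : Ordinal} (ha : a ∈ A) :
    a < sSup A :=
  (le_csSup hbdd ha).lt_of_ne (ne_of_mem_of_not_mem ha hA)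

lemma isSuccLimit_sSup_of_sSup_notMem (hne : A.Nonempty) (hbdd : BddAbove A) (hA : sSup A ∉ A) :
    IsSuccLimit (sSup A) :=
  not_not.1 fun h => hA (csSup_mem_of_not_isSuccLimit hne hbdd h)

lemma cof_sSup_eq_aleph0 (hcount : A.Countable) (hne : A.Nonempty) (hA : sSup A ∉ A) :
    (sSup A).cof = ℵ₀ := by
  have : Countable A := hcount.to_subtype
  have hbdd : BddAbove A := Ordinal.bddAbove_of_small
  refine le_antisymm (not_lt.1 fun hlt => ?_)
    (aleph0_le_cof_iff.2 (one_lt_cof_iff.2 (isSuccLimit_sSup_of_sSup_notMem hne hbdd hA)))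
  refine (sSup_lt_of_lt_cof ?_ fun a ha => lt_sSup_of_sSup_notMem hbdd hA ha).false
  rw [← lift_cof]
  exact (le_aleph0_iff_set_countable.2 hcount).trans_lt (aleph0_lt_lift.2 hlt)

lemma isLimitPt_sSup {C : Set Ordinal.{u}} (hAC : A ⊆ C) (hne : A.Nonempty) (hbdd : BddAbove A)
    (hA : sSup A ∉ A) : IsLimitPt C (sSup A) := by
  have hlt := fun {a} (ha : a ∈ A) => lt_sSup_of_sSup_notMem hbdd hA ha
  refine ⟨zero_le.trans_lt (hlt hne.some_mem), le_antisymm ?_ ?_⟩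
  · exact csSup_le_csSup ⟨sSup A, fun x hx => hx.2.le⟩ hne fun a ha => ⟨hAC ha, hlt ha⟩
  · exact csSup_le' fun x hx => hx.2.le

lemma sSup_image_Iio_sSup {f : Ordinal.{u} → Ordinal.{u}} (hf : MonotoneOn f (Iio (sSup A)))
    (hbdd : BddAbove A) (hA : sSup A ∉ A) : sSup (f '' Iio (sSup A)) = sSup (f '' A) := by
  have hlt := fun {a} (ha : a ∈ A) => lt_sSup_of_sSup_notMem hbdd hA ha
  have : Small.{u} A := Ordinal.bddAbove_iff_small.1 hbdd
  refine le_antisymm (csSup_le' ?_) (csSup_le_csSup' Ordinal.bddAbove_of_small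
    (image_mono fun a ha => hlt ha))
  rintro _ ⟨ξ, hξ, rfl⟩
  obtain ⟨a, ha, hξa⟩ := exists_lt_of_lt_csSup' (mem_Iio.1 hξ)
  exact (hf hξ (hlt ha) hξa.le).trans (le_csSup Ordinal.bddAbove_of_small (mem_image_of_mem f ha))

end SupWithoutMax

theorem ClosedIn.image {bb : Ordinal.{u}} {π : Ordinal.{u} → Ordinal.{u}} {D : Set Ordinal.{u}}
    (hπ : StrictMonoOn π (Iio bb))
    (hcont : ∀ δ < bb, IsSuccLimit δ → δ.cof = ℵ₀ → π δ = sSup (π '' Iio δ))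
    (hD : D ⊆ Iio bb) (hclosed : ClosedIn D (sSup D))
    (hseg : ∀ δ ∈ D, (D ∩ Iio δ).Countable) :
    ClosedIn (π '' D) (sSup (π '' D)) := by
  rintro β hβ ⟨hβpos, hβsup⟩
  rw [← image_inter_preimage] at hβsup
  set A := D ∩ π ⁻¹' Iio β
  obtain ⟨_, ⟨δ₀, hδ₀, rfl⟩, hβδ₀⟩ := exists_lt_of_lt_csSup' hβ
  have hAδ₀ : A ⊆ D ∩ Iio δ₀ := fun δ hδ =>
    ⟨hδ.1, (hπ.lt_iff_lt (hD hδ.1) (hD hδ₀)).1 (lt_trans hδ.2 hβδ₀)⟩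
  have hbdd : BddAbove A := ⟨δ₀, fun δ hδ => (hAδ₀ hδ).2.le⟩
  have hne : A.Nonempty := by
    refine nonempty_iff_ne_empty.2 fun hA => hβpos.ne' ?_
    rw [hβsup, hA, image_empty, csSup_empty, bot_eq_zero]
  -- a largest element of `A` would have image `β` by `hβsup`, but images of `A` lie below `β`
  have hA : sSup A ∉ A := fun hmem => hmem.2.not_ge <| hβsup ▸ csSup_le' <| by
    rintro _ ⟨δ, hδ, rfl⟩
    exact hπ.monotoneOn (hD hδ.1) (hD hmem.1) (le_csSup hbdd hδ)
  have hsupD : sSup A ∈ D := by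
    rcases (csSup_le hne fun δ hδ => (hAδ₀ hδ).2.le).lt_or_eq with hlt | heq
    · exact hclosed _ (hlt.trans_le (le_csSup ⟨bb, fun δ hδ => (hD hδ).le⟩ hδ₀))
        (isLimitPt_sSup inter_subset_left hne hbdd hA)
    · exact heq ▸ hδ₀
  refine ⟨sSup A, hsupD, ?_⟩
  rw [hcont _ (hD hsupD) (isSuccLimit_sSup_of_sSup_notMem hne hbdd hA)
    (cof_sSup_eq_aleph0 ((hseg δ₀ hδ₀).mono hAδ₀) hne hA), hβsup]
  exact sSup_image_Iio_sSup (hπ.monotoneOn.mono (Iio_subset_Iio (hD hsupD).le)) hbdd hA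

/-- If `π : β̄ → Ord` is strictly increasing and continuous at points of
countable cofinality, and `D ⊆ β̄` is closed in `sup D` of order type exactly
`ω₁`, then `π '' D` is closed in `sup (π '' D)` and has order type exactly `ω₁`. -/
theorem image_closed_orderType_omega1
    (bb : Ordinal) (π : Ordinal → Ordinal)
    (hmono : ∀ x y : Ordinal, x < y → y < bb → π x < π y)
    (hcont : ∀ δ < bb, Order.IsSuccLimit δ → δ.cof = Cardinal.aleph0 →
      π δ = sSup (π '' Set.Iio δ))
    (D : Set Ordinal) (hD : D ⊆ Set.Iio bb)
    (hclosed : ClosedIn D (sSup D))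
    (hot : otype D = (Cardinal.aleph 1).ord) :
    ClosedIn (π '' D) (sSup (π '' D)) ∧
      otype (π '' D) = (Cardinal.aleph 1).ord := by
  have hπ : StrictMonoOn π (Iio bb) := fun x _ y hy hxy => hmono x y hxy hy
  exact ⟨ClosedIn.image hπ hcont hD hclosed fun δ => countable_inter_Iio_of_otype_eq_omega1 hot,
    (otype_image_of_strictMonoOn (hπ.mono hD)).trans hot⟩
end
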